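/- arXiv:0810.2106 — 6 statements merged into one kernel-verified Lean document; each statement's English description precedes it below -/
import Mathlib

section
/- Let n be an integer not divisible by ℓ^f + 1. Then there exist a ∈ {0,…,ℓ^f−2}, b ∈ {1,…,ℓ}^f and two distinct subsets B₁ ≠ B₂ of {0,…,f−1} with (a,b,B₁) ∈ T(n) and (a,b,B₂) ∈ T(n) if and only if there exist integers r ≥ 0 and m with (ℓ−1)·|m| ≤ ℓ^{f−1} − ℓ such that ℓ^r · n ≡ m (mod ℓ^f + 1). -/
/-!
Modulo `N = ℓ^f + 1`, a divisor of `ℓ^{2f} - 1` on which `ℓ^f ≡ -1`, a triple `(a, b, B) ∈ T(n)`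
amounts to a signed-digit expansion `n ≡ ∑ dᵢ ℓⁱ` with `1 ≤ |dᵢ| ≤ ℓ`, the sign of `dᵢ` recording
whether `i ∈ B`, and `a` is then determined modulo `ℓ^f - 1`. Two sets `B₁ ≠ B₂` sharing `a` and
`b` amount to a nonempty set `J = B₁ ∆ B₂` of positions whose partial sum `∑_{i ∈ J} dᵢ ℓⁱ` is
divisible by `N`. Since that partial sum is less than `2N` in absolute value, it is `0` or `±N`,
which forces `J` to contain two cyclically consecutive positions.

Multiplication by `ℓ` acts on expansions modulo `N` as the negacyclic shift of the digits. Shifting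
the consecutive pair into the two top positions, the remaining digits sum to an `m ≡ ℓ^r n` with
`(ℓ - 1)|m| ≤ ℓ^{f-1} - ℓ`. Conversely, such an `m ≠ 0` has a signed-digit expansion in the
`f - 2` low positions; appending the top digits `ℓ, -1`, whose contribution vanishes, and shifting
by `(2f - 1)r` more positions (recall `ℓ^{2f} ≡ 1`) gives back an expansion of `n` with a pair.
-/

namespace Stmt10

/-- The set `T(n)` of triples `(a,b,B)` with `a ∈ {0,…,ℓ^f−2}`,
`b ∈ {1,…,ℓ}^f`, `B ⊆ {0,…,f−1}` and
`n ≡ a(ℓ^f+1) + ∑_{i∈B} b_i ℓ^i + ∑_{i∉B} b_i ℓ^{f+i} (mod ℓ^{2f}−1)`. -/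
def Tset (ℓ f : ℕ) (n : ℤ) : Set (ℤ × (Fin f → ℤ) × Finset (Fin f)) :=
  {x | (0 ≤ x.1 ∧ x.1 ≤ (ℓ : ℤ) ^ f - 2) ∧
    (∀ i, 1 ≤ x.2.1 i ∧ x.2.1 i ≤ (ℓ : ℤ)) ∧
    Int.ModEq ((ℓ : ℤ) ^ (2 * f) - 1) n
      (x.1 * ((ℓ : ℤ) ^ f + 1) + ∑ i ∈ x.2.2, x.2.1 i * (ℓ : ℤ) ^ (i : ℕ) +
        ∑ i ∈ x.2.2ᶜ, x.2.1 i * (ℓ : ℤ) ^ (f + (i : ℕ)))}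

open Finset Fin.NatCast

def IsSignedDigit (L x : ℤ) : Prop := 1 ≤ |x| ∧ |x| ≤ L

def digitSum {f : ℕ} (L : ℤ) (d : Fin f → ℤ) (J : Finset (Fin f)) : ℤ :=
  ∑ i ∈ J, d i * L ^ (i : ℕ)

def maxDigitSum (L : ℤ) (t : ℕ) : ℤ := ∑ i ∈ range t, L ^ (i + 1)

section SignedDigits

variable {L : ℤ}

lemma IsSignedDigit.neg {x : ℤ} (h : IsSignedDigit L x) : IsSignedDigit L (-x) := by
  rwa [IsSignedDigit, abs_neg]

lemma maxDigitSum_succ (L : ℤ) (t : ℕ) : maxDigitSum L (t + 1) = L + L * maxDigitSum L t := by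
  simp only [maxDigitSum, sum_range_succ', mul_sum]
  ring_nf

lemma maxDigitSum_nonneg (hL : 0 ≤ L) (t : ℕ) : 0 ≤ maxDigitSum L t :=
  sum_nonneg fun _ _ => by positivity

lemma sub_one_mul_maxDigitSum (L : ℤ) (t : ℕ) : (L - 1) * maxDigitSum L t = L ^ (t + 1) - L := by
  induction t with
  | zero => simp [maxDigitSum]
  | succ t ih => rw [maxDigitSum_succ, mul_add, mul_left_comm, ih]; ring

lemma abs_le_maxDigitSum_iff (hL : 2 ≤ L) (x : ℤ) (t : ℕ) :
    |x| ≤ maxDigitSum L t ↔ (L - 1) * |x| ≤ L ^ (t + 1) - L := by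
  rw [← sub_one_mul_maxDigitSum, mul_le_mul_iff_right₀ (by linarith)]

lemma digitSum_univ_cons {t : ℕ} (e : ℤ) (g : Fin t → ℤ) :
    digitSum L (Fin.cons e g : Fin (t + 1) → ℤ) univ = e + L * digitSum L g univ := by
  simp only [digitSum, Fin.sum_univ_succ, Fin.cons_zero, Fin.cons_succ, Fin.val_zero,
    Fin.val_succ, pow_zero, mul_one, pow_succ', mul_sum]
  exact congrArg (e + ·) (sum_congr rfl fun i _ => by ring)

lemma digitSum_univ_snoc {t : ℕ} (g : Fin t → ℤ) (e : ℤ) :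
    digitSum L (Fin.snoc g e : Fin (t + 1) → ℤ) univ = digitSum L g univ + e * L ^ t := by
  simp [digitSum, Fin.sum_univ_castSucc]

lemma digitSum_add_digitSum_compl {f : ℕ} {d : Fin f → ℤ} (J : Finset (Fin f)) :
    digitSum L d J + digitSum L d Jᶜ = digitSum L d univ :=
  sum_add_sum_compl _ _

lemma abs_digitSum_le (hL : 0 ≤ L) {f : ℕ} {d : Fin f → ℤ} (hd : ∀ i, |d i| ≤ L)
    {J : Finset (Fin f)} {t : ℕ} (hJ : ∀ i ∈ J, (i : ℕ) < t) :
    |digitSum L d J| ≤ maxDigitSum L t := by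
  calc |digitSum L d J| ≤ ∑ i ∈ J, L ^ ((i : ℕ) + 1) := by
        refine (abs_sum_le_sum_abs _ _).trans (sum_le_sum fun i _ => ?_)
        rw [abs_mul, abs_pow, abs_of_nonneg hL, pow_succ']
        exact mul_le_mul_of_nonneg_right (hd i) (by positivity)
    _ = ∑ j ∈ J.map Fin.valEmbedding, L ^ (j + 1) := by rw [sum_map]; rfl
    _ ≤ maxDigitSum L t :=
        sum_le_sum_of_subset_of_nonneg (fun j hj => by
          obtain ⟨i, hi, rfl⟩ := mem_map.mp hj
          exact mem_range.mpr (hJ i hi)) (fun _ _ _ => by positivity)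

lemma exists_signedDigit_add_mul_of_pos (hL : 2 ≤ L) {G x : ℤ} (hG : 2 ≤ G) (hx : 0 < x)
    (hxG : x ≤ L + L * G) :
    ∃ e y, IsSignedDigit L e ∧ 1 ≤ |y| ∧ |y| ≤ G ∧ x = e + L * y := by
  rcases lt_trichotomy x L with hxL | rfl | hLx
  · refine ⟨x - L, 1, ?_, by simp, by simp; omega, by ring⟩
    constructor <;> rw [abs_of_neg (by omega)] <;> omega
  · exact ⟨-x, 2, ⟨by rw [abs_neg, abs_of_pos hx]; omega, by rw [abs_neg, abs_of_pos hx]⟩, by simp,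
      by simpa using hG, by ring⟩
  · have hr := Int.emod_nonneg (x - 1) (by omega : L ≠ 0)
    have hrL := Int.emod_lt_of_pos (x - 1) (by omega : 0 < L)
    have hdiv := Int.mul_ediv_add_emod (x - 1) L
    have hq : 0 < (x - 1) / L := by nlinarith
    have hqG : (x - 1) / L ≤ G := by nlinarith
    refine ⟨(x - 1) % L + 1, (x - 1) / L, ?_, ?_, ?_, by linarith⟩
    · constructor <;> rw [abs_of_pos (by omega)] <;> omega
    · rw [abs_of_pos hq]; omega
    · rwa [abs_of_pos hq]

lemma exists_signedDigit_add_mul (hL : 2 ≤ L) {G x : ℤ} (hG : 2 ≤ G) (hx : 1 ≤ |x|)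
    (hxG : |x| ≤ L + L * G) :
    ∃ e y, IsSignedDigit L e ∧ 1 ≤ |y| ∧ |y| ≤ G ∧ x = e + L * y := by
  rcases lt_or_gt_of_ne (abs_pos.mp (by omega : 0 < |x|)) with hneg | hpos
  · rw [abs_of_neg hneg] at hxG
    obtain ⟨e, y, he, hy1, hyG, hxe⟩ :=
      exists_signedDigit_add_mul_of_pos hL hG (neg_pos.mpr hneg) hxG
    exact ⟨-e, -y, he.neg, by rwa [abs_neg], by rwa [abs_neg], by linarith⟩
  · rw [abs_of_pos hpos] at hxG
    exact exists_signedDigit_add_mul_of_pos hL hG hpos hxG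

lemma exists_digitSum_eq (hL : 2 ≤ L) (t : ℕ) {x : ℤ} (hx : 1 ≤ |x|)
    (hxt : |x| ≤ maxDigitSum L (t + 1)) :
    ∃ g : Fin (t + 1) → ℤ, (∀ i, IsSignedDigit L (g i)) ∧ digitSum L g univ = x := by
  induction t generalizing x with
  | zero =>
    refine ⟨fun _ => x, fun _ => ⟨hx, by simpa [maxDigitSum] using hxt⟩, ?_⟩
    simp [digitSum]
  | succ t ih =>
    have hG : 2 ≤ maxDigitSum L (t + 1) := by
      rw [maxDigitSum_succ]; nlinarith [maxDigitSum_nonneg (by omega : 0 ≤ L) t]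
    rw [maxDigitSum_succ] at hxt
    obtain ⟨e, y, he, hy1, hyG, rfl⟩ := exists_signedDigit_add_mul hL hG hx hxt
    obtain ⟨g, hg, rfl⟩ := ih hy1 hyG
    exact ⟨Fin.cons e g, Fin.cases he hg, digitSum_univ_cons e g⟩

end SignedDigits

section NegacyclicShift

variable {L : ℤ} {F : ℕ}

def negacyclicShift (d : Fin (F + 1) → ℤ) : Fin (F + 1) → ℤ :=
  Fin.cons (-d (Fin.last F)) fun i => d i.castSucc

lemma isSignedDigit_negacyclicShift {d : Fin (F + 1) → ℤ} (hd : ∀ i, IsSignedDigit L (d i)) :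
    ∀ i, IsSignedDigit L (negacyclicShift d i) :=
  Fin.cases (hd _).neg fun i => hd i.castSucc

lemma negacyclicShift_add_one_mul_pow (d : Fin (F + 1) → ℤ) (i : Fin (F + 1)) :
    negacyclicShift d (i + 1) * L ^ ((i + 1 : Fin (F + 1)) : ℕ) =
      L * (d i * L ^ (i : ℕ)) - if i = Fin.last F then (L ^ (F + 1) + 1) * d i else 0 := by
  cases i using Fin.lastCases with
  | last => simp [negacyclicShift, pow_succ]; ring
  | cast j =>
    simp [negacyclicShift, Fin.coeSucc_eq_succ, Fin.castSucc_ne_last, pow_succ]; ring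

lemma dvd_mul_digitSum_sub_digitSum_negacyclicShift (d : Fin (F + 1) → ℤ)
    (J : Finset (Fin (F + 1))) :
    L ^ (F + 1) + 1 ∣
      L * digitSum L d J - digitSum L (negacyclicShift d) (J.image (· + 1)) := by
  rw [digitSum, digitSum, sum_image fun _ _ _ _ => add_right_cancel]
  simp_rw [negacyclicShift_add_one_mul_pow, sum_sub_distrib, mul_sum, sub_sub_cancel]
  exact dvd_sum fun i _ => by split_ifs <;> simp

lemma dvd_pow_mul_digitSum_sub_digitSum_iterate (r : ℕ) (d : Fin (F + 1) → ℤ)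
    (J : Finset (Fin (F + 1))) :
    L ^ (F + 1) + 1 ∣ L ^ r * digitSum L d J -
      digitSum L (negacyclicShift^[r] d) (J.image (· + (r : Fin (F + 1)))) := by
  induction r with
  | zero => simp
  | succ r ih =>
    have himage : J.image (· + ((r + 1 : ℕ) : Fin (F + 1))) =
        (J.image (· + (r : Fin (F + 1)))).image (· + 1) := by
      rw [image_image]; congr 1; ext i; simp [add_assoc]
    rw [Function.iterate_succ_apply', himage]
    have := dvd_add (ih.mul_left L) (dvd_mul_digitSum_sub_digitSum_negacyclicShift
      (negacyclicShift^[r] d) (J.image (· + (r : Fin (F + 1)))))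
    rwa [mul_sub, sub_add_sub_cancel, ← mul_assoc, ← pow_succ'] at this

def IsNullSubsumRep {f : ℕ} (L n : ℤ) (d : Fin f → ℤ) (J : Finset (Fin f)) : Prop :=
  (∀ i, IsSignedDigit L (d i)) ∧ J.Nonempty ∧ L ^ f + 1 ∣ n - digitSum L d univ ∧
    L ^ f + 1 ∣ digitSum L d J

def HasNullSubsumRep (L : ℤ) (f : ℕ) (n : ℤ) : Prop :=
  ∃ (d : Fin f → ℤ) (J : Finset (Fin f)), IsNullSubsumRep L n d J

lemma IsNullSubsumRep.iterate {n : ℤ} {d : Fin (F + 1) → ℤ} {J : Finset (Fin (F + 1))}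
    (h : IsNullSubsumRep L n d J) (r : ℕ) :
    IsNullSubsumRep L (L ^ r * n) (negacyclicShift^[r] d) (J.image (· + (r : Fin (F + 1)))) := by
  obtain ⟨hd, hJ, hn, hJN⟩ := h
  have huniv := dvd_pow_mul_digitSum_sub_digitSum_iterate (L := L) r d univ
  rw [image_univ_of_surjective (add_right_surjective _)] at huniv
  have hsub := dvd_pow_mul_digitSum_sub_digitSum_iterate (L := L) r d J
  refine ⟨Function.Iterate.rec _ hd (fun _ => isSignedDigit_negacyclicShift) r, hJ.image _,
    ?_, ?_⟩
  · have := dvd_add (hn.mul_left (L ^ r)) huniv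
    rwa [mul_sub, sub_add_sub_cancel] at this
  · have := dvd_sub (hJN.mul_left (L ^ r)) hsub
    rwa [sub_sub_cancel] at this

lemma HasNullSubsumRep.of_modEq {f : ℕ} {n n' : ℤ} (h : HasNullSubsumRep L f n)
    (hnn' : n ≡ n' [ZMOD L ^ f + 1]) : HasNullSubsumRep L f n' := by
  obtain ⟨d, J, hd, hJ, hn, hJN⟩ := h
  refine ⟨d, J, hd, hJ, ?_, hJN⟩
  have := dvd_add (Int.ModEq.dvd hnn') hn
  rwa [sub_add_sub_cancel] at this

lemma HasNullSubsumRep.of_pow_mul {n : ℤ} (r : ℕ) (h : HasNullSubsumRep L (F + 1) (L ^ r * n)) :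
    HasNullSubsumRep L (F + 1) n := by
  obtain ⟨d, J, hdJ⟩ := h
  refine HasNullSubsumRep.of_modEq ⟨_, _, hdJ.iterate ((2 * F + 1) * r)⟩ ?_
  have hL : L ^ (F + 1) ≡ -1 [ZMOD L ^ (F + 1) + 1] :=
    Int.modEq_iff_dvd.mpr ⟨-1, by ring⟩
  calc L ^ ((2 * F + 1) * r) * (L ^ r * n) = ((L ^ (F + 1)) ^ 2) ^ r * n := by ring
    _ ≡ ((-1) ^ 2) ^ r * n [ZMOD L ^ (F + 1) + 1] := ((hL.pow 2).pow r).mul_right n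
    _ = n := by simp

lemma exists_mem_add_one_mem_of_digitSum_eq_zero (hL : 2 ≤ L) {d : Fin (F + 1) → ℤ}
    (hd : ∀ i, IsSignedDigit L (d i)) {J : Finset (Fin (F + 1))} (hJ : J.Nonempty)
    (h0 : digitSum L d J = 0) : ∃ p ∈ J, p + 1 ∈ J := by
  set p := J.min' hJ
  refine ⟨p, J.min'_mem hJ, ?_⟩
  by_contra hp1
  have hdvd : L ^ ((p : ℕ) + 2) ∣ d p * L ^ (p : ℕ) := by
    rw [digitSum, ← add_sum_erase J _ (J.min'_mem hJ), add_eq_zero_iff_eq_neg] at h0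
    rw [h0, dvd_neg]
    refine dvd_sum fun i hi => dvd_mul_of_dvd_right (pow_dvd_pow L ?_) _
    obtain ⟨hip, hiJ⟩ := mem_erase.mp hi
    have hpi : (p : ℕ) < i := lt_of_le_of_ne (J.min'_le i hiJ) (Fin.val_ne_of_ne hip.symm)
    have hpl : p ≠ Fin.last F := fun hl => by
      have := i.isLt; rw [hl, Fin.val_last] at hpi; omega
    have : (i : ℕ) ≠ p + 1 := fun h =>
      hp1 (by rwa [show p + 1 = i from Fin.ext (by rw [Fin.val_add_one, if_neg hpl, h])])
    omega
  rw [pow_add, mul_comm (d p), mul_dvd_mul_iff_left (by positivity)] at hdvd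
  have := Int.le_of_dvd (by linarith [(hd p).1]) ((dvd_abs _ _).mpr hdvd)
  nlinarith [(hd p).2]

lemma exists_mem_add_one_mem (hL : 2 ≤ L) {d : Fin (F + 1) → ℤ}
    (hd : ∀ i, IsSignedDigit L (d i)) {J : Finset (Fin (F + 1))} (hJ : J.Nonempty)
    (hN : L ^ (F + 1) + 1 ∣ digitSum L d J) : ∃ p ∈ J, p + 1 ∈ J := by
  have hbound (t : ℕ) (ht : ∀ i ∈ J, (i : ℕ) < t) :
      (L - 1) * |digitSum L d J| ≤ L ^ (t + 1) - L := by
    rw [← sub_one_mul_maxDigitSum]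
    exact mul_le_mul_of_nonneg_left (abs_digitSum_le (by omega) (fun i => (hd i).2) ht)
      (by omega)
  obtain ⟨c, hc⟩ := hN
  rcases eq_or_ne c 0 with rfl | hc0
  · exact exists_mem_add_one_mem_of_digitSum_eq_zero hL hd hJ (by simpa using hc)
  -- `|c| ≥ 2` is too large for a sum of `F + 1` signed digits, so the sum is `±(L ^ (F + 1) + 1)`
  have habs : |digitSum L d J| = L ^ (F + 1) + 1 := by
    have hc1 : |c| ≤ 1 := by
      have := hbound (F + 1) fun i _ => i.isLt
      rw [hc, abs_mul, abs_of_pos (by positivity : 0 < L ^ (F + 1) + 1), pow_succ L (F + 1)]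
        at this
      by_contra! hc2
      nlinarith [mul_le_mul_of_nonneg_left (by omega : 2 ≤ |c|)
        (mul_nonneg (by omega : 0 ≤ L - 1) (by positivity : 0 ≤ L ^ (F + 1) + 1)),
        pow_pos (by omega : 0 < L) (F + 1)]
    rw [hc, abs_mul, abs_of_pos (by positivity : 0 < L ^ (F + 1) + 1),
      le_antisymm hc1 (Int.one_le_abs hc0), mul_one]
  have h0 : 0 ∈ J := by
    by_contra h0
    have hLD : L ∣ digitSum L d J := dvd_sum fun i hi =>
      dvd_mul_of_dvd_right (dvd_pow_self L fun h => h0 (by rwa [show i = 0 from Fin.ext h] at hi)) _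
    rw [← dvd_abs, habs, Int.dvd_add_right (dvd_pow_self L (Nat.succ_ne_zero F))] at hLD
    linarith [Int.le_of_dvd one_pos hLD]
  have hlast : Fin.last F ∈ J := by
    by_contra hl
    have := hbound F fun i hi => lt_of_le_of_ne (Nat.lt_succ_iff.mp i.isLt)
      fun h => hl (by rwa [show i = Fin.last F from Fin.ext h] at hi)
    rw [habs] at this
    nlinarith [pow_pos (by omega : 0 < L) (F + 1)]
  exact ⟨Fin.last F, hlast, by rwa [Fin.last_add_one]⟩

lemma Fin.val_lt_sub_one_of_ne_last {i : Fin (F + 1)} (h : i ≠ Fin.last F)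
    (h' : i + 1 ≠ Fin.last F) : (i : ℕ) < F - 1 := by
  have hsucc := Fin.val_add_one i
  rw [if_neg h] at hsucc
  have h₁ : (i : ℕ) ≠ F := fun hi => h (Fin.ext hi)
  have h₂ : (i : ℕ) + 1 ≠ F := fun hi => h' (Fin.ext (by rw [hsucc, hi, Fin.val_last]))
  have := i.isLt
  omega

lemma Fin.add_natCast_sub_val (q : Fin (F + 1)) : q + ((F - q : ℕ) : Fin (F + 1)) = Fin.last F := by
  have := q.isLt
  ext
  rw [Fin.val_add, Fin.val_natCast, Nat.mod_eq_of_lt (by omega : F - q < F + 1), Fin.val_last,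
    Nat.add_sub_cancel' (by omega), Nat.mod_eq_of_lt (by omega)]

lemma HasNullSubsumRep.exists_pow_mul_modEq (hL : 2 ≤ L) {n : ℤ}
    (h : HasNullSubsumRep L (F + 1) n) :
    ∃ (r : ℕ) (m : ℤ), |m| ≤ maxDigitSum L (F - 1) ∧ L ^ r * n ≡ m [ZMOD L ^ (F + 1) + 1] := by
  obtain ⟨d, J, hdJ⟩ := h
  obtain ⟨p, hp, hp1⟩ := exists_mem_add_one_mem hL hdJ.1 hdJ.2.1 hdJ.2.2.2
  -- rotate the consecutive pair `p, p + 1` onto the two top positions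
  set r := F - ((p + 1 : Fin (F + 1)) : ℕ)
  obtain ⟨hd', -, hn', hJ'⟩ := hdJ.iterate r
  set J' := J.image (· + (r : Fin (F + 1)))
  set d' := negacyclicShift^[r] d
  have htop : p + 1 + r = Fin.last F := Fin.add_natCast_sub_val _
  have hlast : Fin.last F ∈ J' := htop ▸ mem_image_of_mem _ hp1
  have hprev : p + r ∈ J' := mem_image_of_mem _ hp
  refine ⟨r, digitSum L d' J'ᶜ,
    abs_digitSum_le (by omega) (fun i => (hd' i).2) fun i hi => ?_, ?_⟩
  · rw [mem_compl] at hi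
    refine Fin.val_lt_sub_one_of_ne_last (by rintro rfl; exact hi hlast) fun h => hi ?_
    rwa [add_right_cancel (h.trans (htop.symm.trans (add_right_comm p 1 _)))]
  · rw [Int.modEq_iff_dvd]
    have e : digitSum L d' J'ᶜ - L ^ r * n =
        -(L ^ r * n - digitSum L d' univ) - digitSum L d' J' := by
      rw [← digitSum_add_digitSum_compl J']; ring
    rw [e]
    exact dvd_sub (dvd_neg.mpr hn') hJ'

lemma hasNullSubsumRep_of_abs_le (hL : 2 ≤ L) {m : ℤ} (hm : 1 ≤ |m|)
    (hmF : |m| ≤ maxDigitSum L (F - 1)) : HasNullSubsumRep L (F + 1) m := by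
  obtain ⟨t, rfl⟩ : ∃ t, F = t + 2 := ⟨F - 2, by
    by_contra hF
    rw [show F - 1 = 0 by omega] at hmF
    simp only [maxDigitSum, range_zero, sum_empty] at hmF
    omega⟩
  obtain ⟨g, hg, hgm⟩ := exists_digitSum_eq hL t hm (by simpa using hmF)
  -- the appended top digits `L, -1` contribute `L * L ^ (t + 1) - L ^ (t + 2) = 0`
  let d : Fin (t + 3) → ℤ := Fin.snoc (Fin.snoc g L) (-1)
  have hsum : digitSum L d univ = m := by
    rw [digitSum_univ_snoc, digitSum_univ_snoc, hgm]; ring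
  have hpair : digitSum L d {(Fin.last (t + 1)).castSucc, Fin.last (t + 2)} = 0 := by
    rw [digitSum, sum_pair (Fin.castSucc_lt_last _).ne]
    simp [d, pow_succ]
    ring
  refine ⟨d, {(Fin.last (t + 1)).castSucc, Fin.last (t + 2)}, ?_, insert_nonempty _ _,
    by simp [hsum], by simp [hpair]⟩
  refine Fin.lastCases ?_ (Fin.lastCases ?_ fun k => ?_)
  · simp [d, IsSignedDigit]; omega
  · simp [d, IsSignedDigit, abs_of_pos (by omega : 0 < L)]; omega
  · simpa [d] using hg k

lemma dvd_of_dvd_pow_mul {r : ℕ} {n : ℤ} (h : L ^ (F + 1) + 1 ∣ L ^ r * n) :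
    L ^ (F + 1) + 1 ∣ n :=
  (IsCoprime.pow_left ⟨-L ^ F, 1, by ring⟩).symm.dvd_of_dvd_mul_left h

theorem hasNullSubsumRep_iff (hL : 2 ≤ L) {n : ℤ} (hn : ¬ L ^ (F + 1) + 1 ∣ n) :
    HasNullSubsumRep L (F + 1) n ↔
      ∃ (r : ℕ) (m : ℤ), (L - 1) * |m| ≤ L ^ F - L ∧ L ^ r * n ≡ m [ZMOD L ^ (F + 1) + 1] := by
  have one_le_abs {r : ℕ} {m : ℤ} (h : L ^ r * n ≡ m [ZMOD L ^ (F + 1) + 1]) : 1 ≤ |m| :=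
    Int.one_le_abs fun hm => hn (dvd_of_dvd_pow_mul (Int.modEq_zero_iff_dvd.mp (hm ▸ h)))
  constructor
  · intro h
    obtain ⟨r, m, hmF, hrm⟩ := h.exists_pow_mul_modEq hL
    obtain ⟨k, rfl⟩ : ∃ k, F = k + 1 := ⟨F - 1, by
      by_contra hF
      rw [show F - 1 = 0 by omega] at hmF
      simp only [maxDigitSum, range_zero, sum_empty] at hmF
      linarith [one_le_abs hrm]⟩
    exact ⟨r, m, (abs_le_maxDigitSum_iff hL m k).mp (by simpa using hmF), hrm⟩
  · rintro ⟨r, m, hmF, hrm⟩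
    obtain ⟨k, rfl⟩ : ∃ k, F = k + 1 := ⟨F - 1, by
      by_contra hF
      rw [show F = 0 by omega, pow_zero] at hmF
      nlinarith [one_le_abs hrm]⟩
    have := hasNullSubsumRep_of_abs_le (F := k + 1) hL (one_le_abs hrm)
      (by simpa using (abs_le_maxDigitSum_iff hL m k).mpr hmF)
    exact (this.of_modEq hrm.symm).of_pow_mul r

end NegacyclicShift

section Tset

variable {f : ℕ} {L : ℤ}

def signed (B : Finset (Fin f)) (b : Fin f → ℤ) : Fin f → ℤ :=
  fun i => if i ∈ B then b i else -b i

def tValue (L : ℤ) (b : Fin f → ℤ) (B : Finset (Fin f)) : ℤ :=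
  ∑ i ∈ B, b i * L ^ (i : ℕ) + ∑ i ∈ Bᶜ, b i * L ^ (f + (i : ℕ))

lemma mem_Tset_iff {ℓ : ℕ} {n a : ℤ} {b : Fin f → ℤ} {B : Finset (Fin f)} :
    (a, b, B) ∈ Tset ℓ f n ↔ (0 ≤ a ∧ a ≤ (ℓ : ℤ) ^ f - 2) ∧ (∀ i, 1 ≤ b i ∧ b i ≤ ℓ) ∧
      (ℓ : ℤ) ^ (2 * f) - 1 ∣ a * ((ℓ : ℤ) ^ f + 1) + tValue ℓ b B - n := by
  simp only [Tset, Set.mem_ofPred_eq, Int.modEq_iff_dvd, tValue, add_assoc]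

lemma tValue_eq (L : ℤ) (b : Fin f → ℤ) (B : Finset (Fin f)) :
    tValue L b B = digitSum L b B + L ^ f * digitSum L b Bᶜ := by
  rw [tValue, digitSum, digitSum, mul_sum]
  exact congrArg _ (sum_congr rfl fun i _ => by ring)

lemma digitSum_signed (L : ℤ) (B J : Finset (Fin f)) (b : Fin f → ℤ) :
    digitSum L (signed B b) J = digitSum L b (J ∩ B) - digitSum L b (J \ B) := by
  simp only [digitSum, signed, ite_mul, neg_mul, sum_ite, filter_mem_eq_inter,
    filter_notMem_eq_sdiff, sum_neg_distrib, sub_eq_add_neg]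

lemma tValue_eq_digitSum_signed_add (b : Fin f → ℤ) (B : Finset (Fin f)) :
    tValue L b B = digitSum L (signed B b) univ + (L ^ f + 1) * digitSum L b Bᶜ := by
  rw [tValue_eq, digitSum_signed, univ_inter, ← compl_eq_univ_sdiff]
  ring

lemma tValue_sub_tValue (b : Fin f → ℤ) (B₁ B₂ : Finset (Fin f)) :
    tValue L b B₂ - tValue L b B₁ = (L ^ f - 1) * digitSum L (signed B₁ b) (symmDiff B₁ B₂) := by
  have hcompl (B : Finset (Fin f)) : digitSum L b Bᶜ = digitSum L b univ - digitSum L b B :=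
    eq_sub_of_add_eq' (digitSum_add_digitSum_compl B)
  have hinter : symmDiff B₁ B₂ ∩ B₁ = B₁ \ B₂ := by ext; simp [mem_symmDiff]; tauto
  have hsdiff : digitSum L b (B₁ \ B₂) - digitSum L b (B₂ \ B₁) =
      digitSum L b B₁ - digitSum L b B₂ := sum_sdiff_sub_sum_sdiff
  rw [tValue_eq, tValue_eq, hcompl, hcompl, digitSum_signed, hinter, symmDiff_sdiff_left, hsdiff]
  ring

lemma exists_mul_dvd_sub_mul {K N x : ℤ} (hK : 0 < K) (h : N ∣ x) :
    ∃ a, 0 ≤ a ∧ a < K ∧ K * N ∣ x - a * N := by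
  obtain ⟨w, rfl⟩ := h
  exact ⟨w % K, Int.emod_nonneg _ hK.ne', Int.emod_lt_of_pos _ hK, w / K,
    by rw [Int.emod_def]; ring⟩

variable {ℓ : ℕ}

lemma HasNullSubsumRep.of_mem_Tset (hℓ : 2 ≤ ℓ) {n a : ℤ} {b : Fin f → ℤ}
    {B₁ B₂ : Finset (Fin f)} (hne : B₁ ≠ B₂) (h₁ : (a, b, B₁) ∈ Tset ℓ f n)
    (h₂ : (a, b, B₂) ∈ Tset ℓ f n) : HasNullSubsumRep ℓ f n := by
  rw [mem_Tset_iff] at h₁ h₂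
  obtain ⟨-, hb, h₁⟩ := h₁
  obtain ⟨-, -, h₂⟩ := h₂
  have hf : f ≠ 0 := by rintro rfl; exact hne (Subsingleton.elim _ _)
  have hK : (ℓ : ℤ) ^ f - 1 ≠ 0 := by
    have := one_lt_pow₀ (by exact_mod_cast hℓ : (1 : ℤ) < ℓ) hf; omega
  have hM : (ℓ : ℤ) ^ (2 * f) - 1 = ((ℓ : ℤ) ^ f - 1) * ((ℓ : ℤ) ^ f + 1) := by ring
  rw [hM] at h₁ h₂
  refine ⟨signed B₁ b, symmDiff B₁ B₂, fun i => ?_, symmDiff_nonempty.mpr hne, ?_, ?_⟩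
  · have hbi : IsSignedDigit ℓ (b i) := by
      rw [IsSignedDigit, abs_of_pos (by linarith [hb i])]; exact hb i
    unfold signed; split_ifs
    exacts [hbi, hbi.neg]
  · have := dvd_of_mul_left_dvd h₁
    rw [tValue_eq_digitSum_signed_add] at this
    have e : n - digitSum ℓ (signed B₁ b) univ =
        ((ℓ : ℤ) ^ f + 1) * (a + digitSum ℓ b B₁ᶜ) - (a * ((ℓ : ℤ) ^ f + 1) +
          (digitSum ℓ (signed B₁ b) univ + ((ℓ : ℤ) ^ f + 1) * digitSum ℓ b B₁ᶜ) - n) := by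
      ring
    rw [e]
    exact dvd_sub (dvd_mul_right _ _) this
  · have := dvd_sub h₂ h₁
    rw [sub_sub_sub_cancel_right, add_sub_add_left_eq_sub, tValue_sub_tValue] at this
    exact (mul_dvd_mul_iff_left hK).mp this

lemma HasNullSubsumRep.exists_mem_Tset (hℓ : 2 ≤ ℓ) {n : ℤ} (h : HasNullSubsumRep ℓ f n) :
    ∃ (a : ℤ) (b : Fin f → ℤ) (B₁ B₂ : Finset (Fin f)), B₁ ≠ B₂ ∧
      (a, b, B₁) ∈ Tset ℓ f n ∧ (a, b, B₂) ∈ Tset ℓ f n := by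
  obtain ⟨d, J, hd, hJ, hn, hJN⟩ := h
  have hf : f ≠ 0 := by rintro rfl; obtain ⟨i, -⟩ := hJ; exact i.elim0
  have hK : 0 < (ℓ : ℤ) ^ f - 1 := by
    have := one_lt_pow₀ (by exact_mod_cast hℓ : (1 : ℤ) < ℓ) hf; omega
  have hM : (ℓ : ℤ) ^ (2 * f) - 1 = ((ℓ : ℤ) ^ f - 1) * ((ℓ : ℤ) ^ f + 1) := by ring
  set b : Fin f → ℤ := fun i => |d i|
  set B₁ := univ.filter fun i => 0 < d i
  have hsigned : signed B₁ b = d := by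
    ext i
    have hdi : d i ≠ 0 := abs_pos.mp (hd i).1
    by_cases hi : 0 < d i
    · simp [signed, B₁, b, hi, abs_of_pos hi]
    · simp [signed, B₁, b, hi, abs_of_neg (lt_of_le_of_ne (not_lt.mp hi) hdi)]
  have hB₁ : (ℓ : ℤ) ^ f + 1 ∣ n - tValue ℓ b B₁ := by
    rw [tValue_eq_digitSum_signed_add, hsigned, ← sub_sub]
    exact dvd_sub hn (dvd_mul_right _ _)
  obtain ⟨a, ha₀, haK, ha⟩ := exists_mul_dvd_sub_mul hK hB₁
  have h₁ : (ℓ : ℤ) ^ (2 * f) - 1 ∣ a * ((ℓ : ℤ) ^ f + 1) + tValue ℓ b B₁ - n := by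
    rw [hM, show a * ((ℓ : ℤ) ^ f + 1) + tValue ℓ b B₁ - n =
      -(n - tValue ℓ b B₁ - a * ((ℓ : ℤ) ^ f + 1)) by ring]
    exact ha.neg_right
  have h₂ : (ℓ : ℤ) ^ (2 * f) - 1 ∣ a * ((ℓ : ℤ) ^ f + 1) + tValue ℓ b (symmDiff B₁ J) - n := by
    rw [show a * ((ℓ : ℤ) ^ f + 1) + tValue ℓ b (symmDiff B₁ J) - n =
      a * ((ℓ : ℤ) ^ f + 1) + tValue ℓ b B₁ - n + (tValue ℓ b (symmDiff B₁ J) - tValue ℓ b B₁)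
      by ring, tValue_sub_tValue, symmDiff_symmDiff_cancel_left, hsigned, hM]
    exact dvd_add (hM ▸ h₁) (mul_dvd_mul_left _ hJN)
  have hb : ∀ i, 1 ≤ b i ∧ b i ≤ ℓ := hd
  exact ⟨a, b, B₁, symmDiff B₁ J, fun h => hJ.ne_empty (symmDiff_eq_left.mp h.symm),
    mem_Tset_iff.mpr ⟨⟨ha₀, by omega⟩, hb, h₁⟩, mem_Tset_iff.mpr ⟨⟨ha₀, by omega⟩, hb, h₂⟩⟩

theorem exists_mem_Tset_iff (hℓ : 2 ≤ ℓ) (n : ℤ) :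
    (∃ (a : ℤ) (b : Fin f → ℤ) (B₁ B₂ : Finset (Fin f)), B₁ ≠ B₂ ∧
      (a, b, B₁) ∈ Tset ℓ f n ∧ (a, b, B₂) ∈ Tset ℓ f n) ↔ HasNullSubsumRep ℓ f n :=
  ⟨fun ⟨_, _, _, _, hne, h₁, h₂⟩ => .of_mem_Tset hℓ hne h₁ h₂, (·.exists_mem_Tset hℓ)⟩

end Tset

/-- For `n` not divisible by `ℓ^f + 1`: there exist `a`, `b` and distinct
`B₁ ≠ B₂` with `(a,b,B₁), (a,b,B₂) ∈ T(n)` iff there exist integers `r ≥ 0`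
and `m` with `(ℓ−1)|m| ≤ ℓ^{f−1} − ℓ` such that
`ℓ^r n ≡ m (mod ℓ^f + 1)`. -/
theorem stmt10 (ℓ f : ℕ) (hℓ : ℓ.Prime) (hf : 0 < f) (n : ℤ)
    (hn : ¬ ((ℓ : ℤ) ^ f + 1) ∣ n) :
    (∃ (a : ℤ) (b : Fin f → ℤ) (B₁ B₂ : Finset (Fin f)), B₁ ≠ B₂ ∧
      (a, b, B₁) ∈ Tset ℓ f n ∧ (a, b, B₂) ∈ Tset ℓ f n) ↔
    (∃ (r : ℕ) (m : ℤ), ((ℓ : ℤ) - 1) * |m| ≤ (ℓ : ℤ) ^ (f - 1) - (ℓ : ℤ) ∧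
      Int.ModEq ((ℓ : ℤ) ^ f + 1) ((ℓ : ℤ) ^ r * n) m) := by
  obtain ⟨F, rfl⟩ : ∃ F, f = F + 1 := ⟨f - 1, by omega⟩
  rw [exists_mem_Tset_iff hℓ.two_le, hasNullSubsumRep_iff (by exact_mod_cast hℓ.two_le) hn,
    Nat.add_sub_cancel]
end Stmt10
end

section
/- For all integers n₁, n₂: (i) for each subset B of {0,1,…,f−1} there exists at least one pair (a,b) with (a,b,B) ∈ T(n₁,n₂); (ii) the cardinality M(n₁,n₂) of T(n₁,n₂) equals 2^f plus the number of subsets B of {0,1,…,f−1} with n₁ − n₂ ≡ n_B (mod ℓ^f − 1). -/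
/-!
For fixed `(b, B)` the first congruence determines `a ∈ [0, ℓ^f - 2]` uniquely, and the second
then holds iff `n₁ - n₂ ≡ D_B(b) := ∑_{i∈B} b_i ℓ^i - ∑_{i∉B} b_i ℓ^i (mod m)`, `m = ℓ^f - 1`.
Writing `b_i = c_i + 1` for `i ∈ B` and `b_i = ℓ - c_i` for `i ∉ B` with digits
`c_i ∈ [0, ℓ - 1]` turns this into `D_B(b) = N(c) + n_B - m`, where `N(c) = ∑ c_i ℓ^i` runs once
over `[0, m]`. Since `0` and `m` are the only two elements of `[0, m]` that are congruent mod `m`,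
each `B` admits two vectors `b` if `n₁ - n₂ ≡ n_B` and one otherwise; summing over the `2^f`
subsets `B` gives the count.
-/
namespace Stmt11

/-- `n_B = ∑_{i∈B} ℓ^{i+1} − ∑_{i∉B} ℓ^i`. -/
def nB (ℓ f : ℕ) (B : Finset (Fin f)) : ℤ :=
  ∑ i ∈ B, (ℓ : ℤ) ^ ((i : ℕ) + 1) - ∑ i ∈ Bᶜ, (ℓ : ℤ) ^ (i : ℕ)

/-- The set `T(n₁,n₂)` of triples `(a,b,B)` with `a ∈ {0,…,ℓ^f−2}`,
`b ∈ {1,…,ℓ}^f`, `B ⊆ {0,…,f−1}`, with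
`n₁ ≡ a + ∑_{i∈B} b_i ℓ^i` and `n₂ ≡ a + ∑_{i∉B} b_i ℓ^i (mod ℓ^f−1)`. -/
def Tset2 (ℓ f : ℕ) (n₁ n₂ : ℤ) : Set (ℤ × (Fin f → ℤ) × Finset (Fin f)) :=
  {x | (0 ≤ x.1 ∧ x.1 ≤ (ℓ : ℤ) ^ f - 2) ∧
    (∀ i, 1 ≤ x.2.1 i ∧ x.2.1 i ≤ (ℓ : ℤ)) ∧
    Int.ModEq ((ℓ : ℤ) ^ f - 1) n₁
      (x.1 + ∑ i ∈ x.2.2, x.2.1 i * (ℓ : ℤ) ^ (i : ℕ)) ∧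
    Int.ModEq ((ℓ : ℤ) ^ f - 1) n₂
      (x.1 + ∑ i ∈ x.2.2ᶜ, x.2.1 i * (ℓ : ℤ) ^ (i : ℕ))}

open Finset

def weightedSum (ℓ : ℕ) {f : ℕ} (B : Finset (Fin f)) (b : Fin f → ℤ) : ℤ :=
  ∑ i ∈ B, b i * (ℓ : ℤ) ^ (i : ℕ)

def weightedDiff (ℓ : ℕ) {f : ℕ} (B : Finset (Fin f)) (b : Fin f → ℤ) : ℤ :=
  weightedSum ℓ B b - weightedSum ℓ Bᶜ b

noncomputable def box (ℓ f : ℕ) : Finset (Fin f → ℤ) :=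
  Fintype.piFinset fun _ => Icc 1 (ℓ : ℤ)

def toBox (ℓ : ℕ) {f : ℕ} (B : Finset (Fin f)) (c : Fin f → Fin ℓ) : Fin f → ℤ :=
  fun i => if i ∈ B then (c i : ℤ) + 1 else ℓ - (c i : ℤ)

section Residues

variable {m : ℤ}

theorem mem_Ico_and_modEq_iff (hm : 0 < m) {a t : ℤ} :
    (a ∈ Ico 0 m ∧ a ≡ t [ZMOD m]) ↔ a = t % m := by
  constructor
  · rintro ⟨ha, hat⟩
    rw [mem_Ico] at ha
    rw [← hat.eq, Int.emod_eq_of_lt ha.1 ha.2]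
  · rintro rfl
    exact ⟨mem_Ico.2 ⟨Int.emod_nonneg _ hm.ne', Int.emod_lt_of_pos _ hm⟩, Int.mod_modEq t m⟩

theorem card_filter_Icc_modEq (hm : 0 < m) (t : ℤ) :
    #{x ∈ Icc 0 m | x ≡ t [ZMOD m]} = 1 + if m ≡ t [ZMOD m] then 1 else 0 := by
  have hIco : {x ∈ Ico 0 m | x ≡ t [ZMOD m]} = {t % m} := by
    ext x
    rw [mem_filter, mem_Ico_and_modEq_iff hm, mem_singleton]
  have hm_notMem : m ∉ Ico 0 m := by simp
  rw [← insert_Icc_sub_one_right_eq_Icc hm.le, Icc_sub_one_right_eq_Ico, filter_insert]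
  split_ifs
  · rw [card_insert_of_notMem (fun h => hm_notMem (mem_filter.1 h).1), hIco, card_singleton,
      add_comm]
  · rw [hIco, card_singleton, add_zero]

end Residues

section Digits

variable {ℓ f : ℕ}

theorem image_finFunctionFinEquiv :
    (univ : Finset (Fin f → Fin ℓ)).image (fun c => ((finFunctionFinEquiv c : ℕ) : ℤ))
      = Ico 0 ((ℓ : ℤ) ^ f) := by
  ext x
  simp only [mem_image, mem_univ, true_and, mem_Ico]
  constructor
  · rintro ⟨c, rfl⟩
    exact ⟨by positivity, by exact_mod_cast (finFunctionFinEquiv c).isLt⟩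
  · rintro ⟨hx0, hx⟩
    have hcast : ((ℓ ^ f : ℕ) : ℤ) = (ℓ : ℤ) ^ f := Nat.cast_pow ℓ f
    refine ⟨finFunctionFinEquiv.symm ⟨x.toNat, by omega⟩, ?_⟩
    simp [hx0]

theorem nB_sub_eq (B : Finset (Fin f)) :
    nB ℓ f B - ((ℓ : ℤ) ^ f - 1)
      = ∑ i ∈ B, (ℓ : ℤ) ^ (i : ℕ) - ∑ i ∈ Bᶜ, (ℓ : ℤ) ^ ((i : ℕ) + 1) := by
  have htelescope : ∑ i : Fin f, ((ℓ : ℤ) ^ ((i : ℕ) + 1) - (ℓ : ℤ) ^ (i : ℕ)) = ℓ ^ f - 1 := by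
    rw [Fin.sum_univ_eq_sum_range (fun i => (ℓ : ℤ) ^ (i + 1) - (ℓ : ℤ) ^ i),
      sum_range_sub (fun i => (ℓ : ℤ) ^ i), pow_zero]
  rw [nB, ← htelescope, sum_sub_distrib, ← sum_add_sum_compl B fun i : Fin f => (ℓ : ℤ) ^ (i : ℕ),
    ← sum_add_sum_compl B fun i : Fin f => (ℓ : ℤ) ^ ((i : ℕ) + 1)]
  ring

theorem weightedDiff_toBox (B : Finset (Fin f)) (c : Fin f → Fin ℓ) :
    weightedDiff ℓ B (toBox ℓ B c)
      = (finFunctionFinEquiv c : ℕ) + (nB ℓ f B - ((ℓ : ℤ) ^ f - 1)) := by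
  have hB : weightedSum ℓ B (toBox ℓ B c)
      = ∑ i ∈ B, ((c i : ℤ) * (ℓ : ℤ) ^ (i : ℕ) + (ℓ : ℤ) ^ (i : ℕ)) :=
    sum_congr rfl fun i hi => by rw [toBox, if_pos hi]; ring
  have hBc : weightedSum ℓ Bᶜ (toBox ℓ B c)
      = ∑ i ∈ Bᶜ, ((ℓ : ℤ) ^ ((i : ℕ) + 1) - (c i : ℤ) * (ℓ : ℤ) ^ (i : ℕ)) :=
    sum_congr rfl fun i hi => by rw [toBox, if_neg (mem_compl.1 hi)]; ring
  have hdigits : ((finFunctionFinEquiv c : ℕ) : ℤ)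
      = ∑ i ∈ B, (c i : ℤ) * (ℓ : ℤ) ^ (i : ℕ) + ∑ i ∈ Bᶜ, (c i : ℤ) * (ℓ : ℤ) ^ (i : ℕ) := by
    rw [sum_add_sum_compl, finFunctionFinEquiv_apply]
    push_cast
    rfl
  rw [weightedDiff, hB, hBc, hdigits, nB_sub_eq, sum_add_distrib, sum_sub_distrib]
  ring

theorem toBox_injective (B : Finset (Fin f)) : Function.Injective (toBox ℓ B) := by
  intro c c' h
  funext i
  have hi := congr_fun h i
  apply Fin.ext
  unfold toBox at hi
  split_ifs at hi <;> omega

theorem image_toBox (B : Finset (Fin f)) : univ.image (toBox ℓ B) = box ℓ f := by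
  ext b
  simp only [mem_image, mem_univ, true_and, box, Fintype.mem_piFinset, mem_Icc]
  constructor
  · rintro ⟨c, rfl⟩ i
    have := (c i).isLt
    unfold toBox
    split_ifs <;> omega
  · intro hb
    refine ⟨fun i => ⟨(if i ∈ B then b i - 1 else ℓ - b i).toNat, ?_⟩, ?_⟩
    · have := hb i
      split_ifs <;> omega
    · funext i
      have := hb i
      by_cases hi : i ∈ B <;> simp only [toBox, hi, if_true, if_false] <;> omega

end Digits

section Counting

variable {ℓ f : ℕ}

theorem card_filter_box (B : Finset (Fin f)) (p : ℤ → Prop) [DecidablePred p] :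
    #{b ∈ box ℓ f | p (weightedDiff ℓ B b)}
      = #{x ∈ Icc 0 ((ℓ : ℤ) ^ f - 1) | p (x + (nB ℓ f B - ((ℓ : ℤ) ^ f - 1)))} := by
  have hdigits : Function.Injective fun c : Fin f → Fin ℓ => ((finFunctionFinEquiv c : ℕ) : ℤ) :=
    fun c c' h => finFunctionFinEquiv.injective (Fin.ext (Nat.cast_injective h))
  rw [← image_toBox B, filter_image, card_image_of_injective _ (toBox_injective B),
    Icc_sub_one_right_eq_Ico, ← image_finFunctionFinEquiv, filter_image,
    card_image_of_injective _ hdigits]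
  simp only [weightedDiff_toBox]

theorem card_filter_box_modEq (hℓf : 1 < ℓ ^ f) (B : Finset (Fin f)) (d : ℤ) :
    #{b ∈ box ℓ f | weightedDiff ℓ B b ≡ d [ZMOD (ℓ : ℤ) ^ f - 1]}
      = 1 + if d ≡ nB ℓ f B [ZMOD (ℓ : ℤ) ^ f - 1] then 1 else 0 := by
  set m : ℤ := (ℓ : ℤ) ^ f - 1
  have hm : 0 < m := sub_pos.2 (by exact_mod_cast hℓf)
  have hshift (x : ℤ) : x + (nB ℓ f B - m) ≡ d [ZMOD m] ↔ x ≡ d - nB ℓ f B + m [ZMOD m] := by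
    rw [Int.modEq_iff_dvd, Int.modEq_iff_dvd]
    ring_nf
  have hm_modEq : m ≡ d - nB ℓ f B + m [ZMOD m] ↔ d ≡ nB ℓ f B [ZMOD m] := by
    rw [Int.modEq_iff_dvd, Int.modEq_iff_dvd, ← dvd_neg]
    ring_nf
  rw [card_filter_box B (· ≡ d [ZMOD m]), filter_congr fun x _ => hshift x,
    card_filter_Icc_modEq hm]
  simp only [hm_modEq]

end Counting

section Triples

variable {ℓ f : ℕ} {n₁ n₂ : ℤ}

theorem mem_Tset2_iff (hℓf : 1 < ℓ ^ f) {a : ℤ} {b : Fin f → ℤ} {B : Finset (Fin f)} :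
    (a, b, B) ∈ Tset2 ℓ f n₁ n₂ ↔
      (b ∈ box ℓ f ∧ weightedDiff ℓ B b ≡ n₁ - n₂ [ZMOD (ℓ : ℤ) ^ f - 1]) ∧
        a = (n₁ - weightedSum ℓ B b) % ((ℓ : ℤ) ^ f - 1) := by
  set m : ℤ := (ℓ : ℤ) ^ f - 1
  have hm : 0 < m := sub_pos.2 (by exact_mod_cast hℓf)
  have hrange : (0 ≤ a ∧ a ≤ (ℓ : ℤ) ^ f - 2) ↔ a ∈ Ico 0 m := by
    rw [mem_Ico]
    omega
  have hfirst : n₁ ≡ a + weightedSum ℓ B b [ZMOD m] ↔ a ≡ n₁ - weightedSum ℓ B b [ZMOD m] := by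
    rw [Int.modEq_iff_dvd, Int.modEq_iff_dvd, ← dvd_neg]
    ring_nf
  have hsecond (h : a ≡ n₁ - weightedSum ℓ B b [ZMOD m]) :
      n₂ ≡ a + weightedSum ℓ Bᶜ b [ZMOD m] ↔ weightedDiff ℓ B b ≡ n₁ - n₂ [ZMOD m] := by
    have hsplit : a + weightedSum ℓ Bᶜ b - n₂
        = n₁ - n₂ - weightedDiff ℓ B b - (n₁ - weightedSum ℓ B b - a) := by
      rw [weightedDiff]; ring
    rw [Int.modEq_iff_dvd, Int.modEq_iff_dvd, hsplit, dvd_sub_left (Int.modEq_iff_dvd.1 h)]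
  simp only [Tset2, Set.mem_ofPred_eq, box, Fintype.mem_piFinset, mem_Icc]
  rw [hrange, ← weightedSum, ← weightedSum, hfirst]
  constructor
  · rintro ⟨ha, hb, h₁, h₂⟩
    exact ⟨⟨hb, (hsecond h₁).1 h₂⟩, (mem_Ico_and_modEq_iff hm).1 ⟨ha, h₁⟩⟩
  · rintro ⟨⟨hb, hD⟩, ha⟩
    obtain ⟨ha, h₁⟩ := (mem_Ico_and_modEq_iff hm).2 ha
    exact ⟨ha, hb, h₁, (hsecond h₁).2 hD⟩

theorem ncard_Tset2 (hℓf : 1 < ℓ ^ f) :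
    (Tset2 ℓ f n₁ n₂).ncard = ∑ B : Finset (Fin f),
      #{b ∈ box ℓ f | weightedDiff ℓ B b ≡ n₁ - n₂ [ZMOD (ℓ : ℤ) ^ f - 1]} := by
  have hT : Tset2 ℓ f n₁ n₂ =
      (fun p : (Fin f → ℤ) × Finset (Fin f) =>
          ((n₁ - weightedSum ℓ p.2 p.1) % ((ℓ : ℤ) ^ f - 1), p)) ''
        ↑{p ∈ box ℓ f ×ˢ (univ : Finset (Finset (Fin f))) |
          weightedDiff ℓ p.2 p.1 ≡ n₁ - n₂ [ZMOD (ℓ : ℤ) ^ f - 1]} := by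
    ext ⟨a, b, B⟩
    simp [mem_Tset2_iff hℓf, eq_comm (a := a)]
  rw [hT, Set.ncard_image_of_injective _ fun p q h => (Prod.ext_iff.1 h).2, Set.ncard_coe_finset,
    card_filter, sum_product_right]
  simp only [card_filter]

end Triples

theorem stmt11_general (ℓ f : ℕ) (h2 : 2 < ℓ ^ f)
    (n₁ n₂ : ℤ) :
    (∀ B : Finset (Fin f), ∃ (a : ℤ) (b : Fin f → ℤ),
      (a, b, B) ∈ Tset2 ℓ f n₁ n₂) ∧
    (Tset2 ℓ f n₁ n₂).ncard = 2 ^ f +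
      {B : Finset (Fin f) |
        Int.ModEq ((ℓ : ℤ) ^ f - 1) (n₁ - n₂) (nB ℓ f B)}.ncard := by
  have hℓf : 1 < ℓ ^ f := by omega
  constructor
  · intro B
    have hfiber : 0 < #{b ∈ box ℓ f | weightedDiff ℓ B b ≡ n₁ - n₂ [ZMOD (ℓ : ℤ) ^ f - 1]} := by
      rw [card_filter_box_modEq hℓf]
      omega
    obtain ⟨b, hb⟩ := card_pos.1 hfiber
    exact ⟨_, b, (mem_Tset2_iff hℓf).2 ⟨mem_filter.1 hb, rfl⟩⟩
  · rw [ncard_Tset2 hℓf]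
    simp only [card_filter_box_modEq hℓf, sum_add_distrib, sum_boole, Nat.cast_id]
    rw [sum_const, card_univ, Fintype.card_finset, Fintype.card_fin, smul_eq_mul, mul_one,
      ← coe_filter_univ, Set.ncard_coe_finset]

/-- (i) For each subset `B` there is at least one pair `(a,b)` with
`(a,b,B) ∈ T(n₁,n₂)`; (ii) `#T(n₁,n₂)` equals `2^f` plus the number of `B`
with `n₁ − n₂ ≡ n_B (mod ℓ^f − 1)`. -/
theorem stmt11 (ℓ f : ℕ) (hℓ : ℓ.Prime) (hf : 0 < f) (h2 : 2 < ℓ ^ f)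
    (n₁ n₂ : ℤ) :
    (∀ B : Finset (Fin f), ∃ (a : ℤ) (b : Fin f → ℤ),
      (a, b, B) ∈ Tset2 ℓ f n₁ n₂) ∧
    (Tset2 ℓ f n₁ n₂).ncard = 2 ^ f +
      {B : Finset (Fin f) |
        Int.ModEq ((ℓ : ℤ) ^ f - 1) (n₁ - n₂) (nB ℓ f B)}.ncard :=
  stmt11_general ℓ f h2 n₁ n₂

end Stmt11
end

section
/- Suppose f is odd. If ℓ > 3, then the 2^f residue classes n_B mod ℓ^f − 1, as B runs over all subsets of {0,1,…,f−1}, are pairwise distinct. If ℓ = 2 or ℓ = 3, then n_{{0,…,f−1}} ≡ n_∅ (mod ℓ^f − 1) and this is the only coincidence: for any two distinct subsets B₁ ≠ B₂, one has n_{B₁} ≡ n_{B₂} (mod ℓ^f − 1) if and only if {B₁,B₂} = {∅, {0,…,f−1}}. -/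
/-!
Write `s(B) = ∑_{i ∈ B} ℓ^i` and `S = s(univ) = (ℓ^f - 1)/(ℓ - 1)`. Then `n_B = (ℓ + 1) s(B) - S`,
so `n_{B₁} ≡ n_{B₂}` iff `ℓ^f - 1 ∣ (ℓ + 1)(s(B₂) - s(B₁))`. As `f` is odd, `ℓ + 1 ∣ ℓ^f + 1`,
hence `ℓ^f - 1 = (ℓ - 1) S` also divides `2 (s(B₂) - s(B₁))`, whose absolute value is at most
`2S`; for `ℓ > 3` this forces `s(B₁) = s(B₂)`. For `ℓ = 2, 3` the condition is exactly
`S ∣ s(B₂) - s(B₁)`, i.e. `s(B₂) - s(B₁) ∈ {-S, 0, S}`. Finally `s` is injective by uniqueness of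
base-`ℓ` expansions.
-/

namespace Stmt12

/-- `n_B = ∑_{i∈B} ℓ^{i+1} − ∑_{i∉B} ℓ^i`. -/
def nB (ℓ f : ℕ) (B : Finset (Fin f)) : ℤ :=
  ∑ i ∈ B, (ℓ : ℤ) ^ ((i : ℕ) + 1) - ∑ i ∈ Bᶜ, (ℓ : ℤ) ^ (i : ℕ)

open Finset

def powSum (ℓ : ℕ) {f : ℕ} (B : Finset (Fin f)) : ℕ := ∑ i ∈ B, ℓ ^ (i : ℕ)

lemma powSum_injective {ℓ f : ℕ} (hℓ : 2 ≤ ℓ) : Function.Injective (powSum ℓ (f := f)) := by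
  intro B₁ B₂ h
  have hmap : ∀ B : Finset (Fin f), powSum ℓ B = ∑ i ∈ B.map Fin.valEmbedding, ℓ ^ i := by
    intro B
    rw [sum_map]
    rfl
  rw [hmap, hmap] at h
  exact map_injective _ (geomSum_injective hℓ h)

lemma powSum_le_powSum_univ {ℓ f : ℕ} (B : Finset (Fin f)) :
    powSum ℓ B ≤ powSum ℓ (univ : Finset (Fin f)) :=
  sum_le_sum_of_subset (subset_univ B)

@[simp]
lemma powSum_empty (ℓ f : ℕ) : powSum ℓ (∅ : Finset (Fin f)) = 0 := sum_empty

lemma powSum_univ_mul_sub_one (ℓ f : ℕ) :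
    (powSum ℓ (univ : Finset (Fin f)) : ℤ) * (ℓ - 1) = (ℓ : ℤ) ^ f - 1 := by
  rw [powSum, Nat.cast_sum, Fin.sum_univ_eq_sum_range (fun i => ((ℓ ^ i : ℕ) : ℤ)), ← geom_sum_mul]
  push_cast
  rfl

lemma nB_eq (ℓ f : ℕ) (B : Finset (Fin f)) :
    nB ℓ f B = (ℓ + 1) * (powSum ℓ B : ℤ) - powSum ℓ (univ : Finset (Fin f)) := by
  have hcompl := sum_compl_add_sum B (fun i : Fin f => (ℓ : ℤ) ^ (i : ℕ))
  simp only [nB, powSum, Nat.cast_sum, Nat.cast_pow, pow_succ, ← sum_mul] at hcompl ⊢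
  linear_combination -hcompl

lemma nB_modEq_iff (ℓ f : ℕ) (B₁ B₂ : Finset (Fin f)) :
    nB ℓ f B₁ ≡ nB ℓ f B₂ [ZMOD (ℓ : ℤ) ^ f - 1] ↔
      (ℓ : ℤ) ^ f - 1 ∣ (ℓ + 1) * ((powSum ℓ B₂ : ℤ) - powSum ℓ B₁) := by
  rw [Int.modEq_iff_dvd, nB_eq, nB_eq]
  ring_nf

lemma pow_sub_one_dvd_two_mul_of_dvd {R : Type*} [CommRing R] {x d : R} {n : ℕ} (hn : Odd n)
    (h : x ^ n - 1 ∣ (x + 1) * d) : x ^ n - 1 ∣ 2 * d := by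
  have hadd_dvd : x + 1 ∣ x ^ n + 1 := by simpa using hn.add_dvd_pow_add_pow x 1
  have h' : x ^ n - 1 ∣ (x ^ n + 1) * d :=
    h.trans (mul_dvd_mul_right hadd_dvd d)
  have := h'.sub (dvd_mul_right (x ^ n - 1) d)
  rwa [← sub_mul, add_sub_sub_cancel, one_add_one_eq_two] at this

lemma eq_of_mul_dvd_two_mul_sub {S k a b : ℤ} (ha : 0 ≤ a) (haS : a ≤ S) (hb : 0 ≤ b)
    (hbS : b ≤ S) (hk : 2 < k) (h : S * k ∣ 2 * (b - a)) : a = b := by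
  by_contra hne
  have hpos : 0 < |2 * (b - a)| := abs_pos.mpr (by omega)
  have hle := Int.le_of_dvd hpos ((dvd_abs _ _).mpr h)
  rw [abs_mul, abs_two] at hle
  have hba : |b - a| ≤ S := abs_sub_le_iff.mpr ⟨by omega, by omega⟩
  have hba_pos : 0 < |b - a| := abs_pos.mpr (by omega)
  nlinarith

lemma eq_or_of_dvd_sub {S a b : ℤ} (ha : 0 ≤ a) (haS : a ≤ S) (hb : 0 ≤ b) (hbS : b ≤ S)
    (h : S ∣ b - a) : a = b ∨ (a = 0 ∧ b = S) ∨ (a = S ∧ b = 0) := by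
  obtain ⟨t, ht⟩ := h
  rcases eq_or_lt_of_le (ha.trans haS) with hS | hS
  · omega
  have : -1 ≤ t := by nlinarith
  have : t ≤ 1 := by nlinarith
  interval_cases t <;> omega

lemma pow_sub_one_dvd_add_one_mul_iff {ℓ f : ℕ} (hℓ : ℓ = 2 ∨ ℓ = 3) (hf : Odd f) (d : ℤ) :
    (ℓ : ℤ) ^ f - 1 ∣ (ℓ + 1) * d ↔ (powSum ℓ (univ : Finset (Fin f)) : ℤ) ∣ d := by
  constructor
  · intro h
    have h2 := pow_sub_one_dvd_two_mul_of_dvd hf h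
    rw [← powSum_univ_mul_sub_one] at h h2
    rcases hℓ with rfl | rfl
    · norm_num at h h2
      simpa [show 3 * d - 2 * d = d by ring] using h.sub h2
    · norm_num at h2
      rw [mul_comm] at h2
      exact (mul_dvd_mul_iff_left two_ne_zero).1 h2
  · rintro ⟨c, rfl⟩
    rw [← powSum_univ_mul_sub_one]
    rcases hℓ with rfl | rfl
    · exact ⟨3 * c, by push_cast; ring⟩
    · exact ⟨2 * c, by push_cast; ring⟩

theorem stmt12_general (ℓ f : ℕ) (hfo : Odd f) :
    (3 < ℓ → ∀ B₁ B₂ : Finset (Fin f),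
      Int.ModEq ((ℓ : ℤ) ^ f - 1) (nB ℓ f B₁) (nB ℓ f B₂) → B₁ = B₂) ∧
    ((ℓ = 2 ∨ ℓ = 3) →
      Int.ModEq ((ℓ : ℤ) ^ f - 1) (nB ℓ f Finset.univ) (nB ℓ f ∅) ∧
      (∀ B₁ B₂ : Finset (Fin f), B₁ ≠ B₂ →
        (Int.ModEq ((ℓ : ℤ) ^ f - 1) (nB ℓ f B₁) (nB ℓ f B₂) ↔
          ((B₁ = ∅ ∧ B₂ = Finset.univ) ∨ (B₁ = Finset.univ ∧ B₂ = ∅))))) := by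
  have hle (B : Finset (Fin f)) : (powSum ℓ B : ℤ) ≤ powSum ℓ (univ : Finset (Fin f)) :=
    mod_cast powSum_le_powSum_univ B
  refine ⟨fun hℓ B₁ B₂ h => ?_, fun hℓ => ⟨?_, fun B₁ B₂ hne => ?_⟩⟩
  · have hdvd := pow_sub_one_dvd_two_mul_of_dvd hfo ((nB_modEq_iff ℓ f B₁ B₂).1 h)
    rw [← powSum_univ_mul_sub_one] at hdvd
    refine powSum_injective (by omega : 2 ≤ ℓ) (Int.ofNat_inj.1 ?_)
    exact eq_of_mul_dvd_two_mul_sub (by positivity) (hle B₁) (by positivity) (hle B₂)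
      (by omega : (2 : ℤ) < ℓ - 1) hdvd
  · simp [nB_modEq_iff, pow_sub_one_dvd_add_one_mul_iff hℓ hfo]
  · have hinj := powSum_injective (f := f) (by omega : 2 ≤ ℓ)
    rw [nB_modEq_iff, pow_sub_one_dvd_add_one_mul_iff hℓ hfo]
    constructor
    · intro h
      rcases eq_or_of_dvd_sub (by positivity) (hle B₁) (by positivity) (hle B₂) h with
        h | ⟨h₁, h₂⟩ | ⟨h₁, h₂⟩
      · exact absurd (hinj (mod_cast h)) hne
      · exact .inl ⟨hinj (by simpa using h₁), hinj (mod_cast h₂)⟩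
      · exact .inr ⟨hinj (mod_cast h₁), hinj (by simpa using h₂)⟩
    · rintro (⟨rfl, rfl⟩ | ⟨rfl, rfl⟩) <;> simp

/-- Suppose `f` is odd.  If `ℓ > 3`, the `2^f` residue classes `n_B mod ℓ^f − 1`
are pairwise distinct.  If `ℓ = 2` or `ℓ = 3`, then
`n_{{0,…,f−1}} ≡ n_∅ (mod ℓ^f − 1)` and this is the only coincidence. -/
theorem stmt12 (ℓ f : ℕ) (hℓ : ℓ.Prime) (hf : 0 < f) (hfo : Odd f)
    (h2 : 2 < ℓ ^ f) :
    (3 < ℓ → ∀ B₁ B₂ : Finset (Fin f),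
      Int.ModEq ((ℓ : ℤ) ^ f - 1) (nB ℓ f B₁) (nB ℓ f B₂) → B₁ = B₂) ∧
    ((ℓ = 2 ∨ ℓ = 3) →
      Int.ModEq ((ℓ : ℤ) ^ f - 1) (nB ℓ f Finset.univ) (nB ℓ f ∅) ∧
      (∀ B₁ B₂ : Finset (Fin f), B₁ ≠ B₂ →
        (Int.ModEq ((ℓ : ℤ) ^ f - 1) (nB ℓ f B₁) (nB ℓ f B₂) ↔
          ((B₁ = ∅ ∧ B₂ = Finset.univ) ∨ (B₁ = Finset.univ ∧ B₂ = ∅))))) :=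
  stmt12_general ℓ f hfo

end Stmt12
end

section
/- Suppose f is even and ℓ ≥ 3. Let E = {0,2,…,f−2} be the set of even indices and O = {1,3,…,f−1} the set of odd indices in {0,…,f−1}. Then n_E ≡ n_O ≡ 0 (mod ℓ^f − 1); if ℓ = 3 then additionally n_∅ ≡ n_{{0,…,f−1}} ≡ (3^f−1)/2 (mod 3^f − 1); and for distinct subsets B₁ ≠ B₂ of {0,…,f−1}, one has n_{B₁} ≡ n_{B₂} (mod ℓ^f − 1) if and only if {B₁,B₂} = {E,O}, or ℓ = 3 and {B₁,B₂} = {∅, {0,…,f−1}}. -/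
namespace Stmt13

/-- `n_B = ∑_{i∈B} ℓ^{i+1} − ∑_{i∉B} ℓ^i`. -/
def nB (ℓ f : ℕ) (B : Finset (Fin f)) : ℤ :=
  ∑ i ∈ B, (ℓ : ℤ) ^ ((i : ℕ) + 1) - ∑ i ∈ Bᶜ, (ℓ : ℤ) ^ (i : ℕ)

/-- The set of even indices `E = {0,2,…,f−2}` in `{0,…,f−1}`. -/
def evens (f : ℕ) : Finset (Fin f) := Finset.univ.filter fun i => Even (i : ℕ)

/-- The set of odd indices `O = {1,3,…,f−1}` in `{0,…,f−1}`. -/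
def odds (f : ℕ) : Finset (Fin f) := Finset.univ.filter fun i => ¬ Even (i : ℕ)

lemma digits_aux (ℓ : ℕ) (hℓ : 0 < ℓ) :
    ∀ f (a b : ℕ → ℕ), (∀ i, a i < ℓ) → (∀ i, b i < ℓ) →
    (∑ i ∈ Finset.range f, a i * ℓ ^ i) = (∑ i ∈ Finset.range f, b i * ℓ ^ i) →
    ∀ i < f, a i = b i := by
  intro f
  induction f with
  | zero => exact fun a b _ _ _ i hi => absurd hi (by omega)
  | succ f ih =>
    intro a b ha hb h i hi
    rw [Finset.sum_range_succ', Finset.sum_range_succ'] at h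
    have e1 : ∀ c : ℕ → ℕ, ∑ i ∈ Finset.range f, c (i + 1) * ℓ ^ (i + 1)
        = (∑ i ∈ Finset.range f, c (i + 1) * ℓ ^ i) * ℓ := by
      intro c
      rw [Finset.sum_mul]
      exact Finset.sum_congr rfl fun i _ => by ring
    rw [e1 a, e1 b] at h
    simp only [pow_zero, mul_one] at h
    set A := ∑ i ∈ Finset.range f, a (i + 1) * ℓ ^ i with hA
    set B := ∑ i ∈ Finset.range f, b (i + 1) * ℓ ^ i with hB
    rw [Nat.add_comm (A * ℓ), Nat.add_comm (B * ℓ)] at h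
    have h0 : a 0 = b 0 := by
      have h2 := congrArg (· % ℓ) h
      simpa [Nat.add_mul_mod_self_right, Nat.mod_eq_of_lt (ha 0), Nat.mod_eq_of_lt (hb 0)]
        using h2
    have hAB : A = B := Nat.eq_of_mul_eq_mul_right hℓ (by omega)
    match i, hi with
    | 0, _ => exact h0
    | (j + 1), hj =>
      exact ih (fun i => a (i + 1)) (fun i => b (i + 1)) (fun i => ha _) (fun i => hb _)
        hAB j (by omega)

lemma digits_fin (ℓ f : ℕ) (hℓ : 0 < ℓ) (a b : Fin f → ℕ)
    (ha : ∀ i, a i < ℓ) (hb : ∀ i, b i < ℓ)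
    (h : ∑ i, (a i : ℤ) * (ℓ : ℤ) ^ (i : ℕ) = ∑ i, (b i : ℤ) * (ℓ : ℤ) ^ (i : ℕ)) :
    a = b := by
  set A : ℕ → ℕ := fun i => if h : i < f then a ⟨i, h⟩ else 0 with hA
  set B : ℕ → ℕ := fun i => if h : i < f then b ⟨i, h⟩ else 0 with hB
  have hsum : ∑ i ∈ Finset.range f, A i * ℓ ^ i = ∑ i ∈ Finset.range f, B i * ℓ ^ i := by
    have hcast : ((∑ i ∈ Finset.range f, A i * ℓ ^ i : ℕ) : ℤ)
        = ((∑ i ∈ Finset.range f, B i * ℓ ^ i : ℕ) : ℤ) := by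
      push_cast
      rw [← Fin.sum_univ_eq_sum_range (fun i => (A i : ℤ) * (ℓ : ℤ) ^ i) f,
          ← Fin.sum_univ_eq_sum_range (fun i => (B i : ℤ) * (ℓ : ℤ) ^ i) f]
      simpa [hA, hB] using h
    exact_mod_cast hcast
  funext i
  have key := digits_aux ℓ hℓ f A B
    (fun j => by simp only [hA]; split <;> [exact ha _; exact hℓ])
    (fun j => by simp only [hB]; split <;> [exact hb _; exact hℓ]) hsum i i.isLt
  simpa [hA, hB, i.isLt] using key

lemma sum_evens_eq (x : ℤ) (f : ℕ) (hfe : Even f) :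
    ∑ i ∈ evens f, x ^ (i : ℕ) = ∑ k ∈ Finset.range (f / 2), x ^ (2 * k) := by
  rcases Nat.eq_zero_or_pos f with rfl | hf
  · simp [evens]
  have hf2 : f % 2 = 0 := Nat.even_iff.1 hfe
  refine Finset.sum_nbij' (fun i => (i : ℕ) / 2)
    (fun k => if h : 2 * k < f then ⟨2 * k, h⟩ else ⟨0, hf⟩) ?_ ?_ ?_ ?_ ?_
  · intro a ha
    beta_reduce
    simp only [evens, Finset.mem_filter, Finset.mem_univ, true_and, Nat.even_iff] at ha
    have h1 := a.isLt
    simp only [Finset.mem_range]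
    omega
  · intro k hk
    beta_reduce
    simp only [Finset.mem_range] at hk
    rw [dif_pos (by omega : 2 * k < f)]
    simp only [evens, Finset.mem_filter, Finset.mem_univ, true_and, Nat.even_iff]
    omega
  · intro a ha
    beta_reduce
    simp only [evens, Finset.mem_filter, Finset.mem_univ, true_and, Nat.even_iff] at ha
    have h1 := a.isLt
    rw [dif_pos (by omega : 2 * ((a : ℕ) / 2) < f)]
    exact Fin.ext (by simp only [Fin.val_mk]; omega)
  · intro k hk
    beta_reduce
    simp only [Finset.mem_range] at hk
    rw [dif_pos (by omega : 2 * k < f)]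
    simp only [Fin.val_mk]
    omega
  · intro a ha
    beta_reduce
    simp only [evens, Finset.mem_filter, Finset.mem_univ, true_and, Nat.even_iff] at ha
    have h1 := a.isLt
    congr 1
    omega

lemma sum_odds_eq (x : ℤ) (f : ℕ) (hfe : Even f) :
    ∑ i ∈ odds f, x ^ (i : ℕ) = ∑ k ∈ Finset.range (f / 2), x ^ (2 * k + 1) := by
  rcases Nat.eq_zero_or_pos f with rfl | hf
  · simp [odds]
  have hf2 : f % 2 = 0 := Nat.even_iff.1 hfe
  refine Finset.sum_nbij' (fun i => ((i : ℕ) - 1) / 2)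
    (fun k => if h : 2 * k + 1 < f then ⟨2 * k + 1, h⟩ else ⟨0, hf⟩) ?_ ?_ ?_ ?_ ?_
  · intro a ha
    beta_reduce
    simp only [odds, Finset.mem_filter, Finset.mem_univ, true_and, Nat.even_iff] at ha
    have h1 := a.isLt
    simp only [Finset.mem_range]
    omega
  · intro k hk
    beta_reduce
    simp only [Finset.mem_range] at hk
    rw [dif_pos (by omega : 2 * k + 1 < f)]
    simp only [odds, Finset.mem_filter, Finset.mem_univ, true_and, Nat.even_iff]
    omega
  · intro a ha
    beta_reduce
    simp only [odds, Finset.mem_filter, Finset.mem_univ, true_and, Nat.even_iff] at ha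
    have h1 := a.isLt
    rw [dif_pos (by omega : 2 * (((a : ℕ) - 1) / 2) + 1 < f)]
    exact Fin.ext (by simp only [Fin.val_mk]; omega)
  · intro k hk
    beta_reduce
    simp only [Finset.mem_range] at hk
    rw [dif_pos (by omega : 2 * k + 1 < f)]
    simp only [Fin.val_mk]
    omega
  · intro a ha
    beta_reduce
    simp only [odds, Finset.mem_filter, Finset.mem_univ, true_and, Nat.even_iff] at ha
    have h1 := a.isLt
    congr 1
    omega

def Sf (x : ℤ) {f : ℕ} (B : Finset (Fin f)) : ℤ := ∑ i ∈ B, x ^ (i : ℕ)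

set_option maxHeartbeats 1000000 in
/-- Suppose `f` is even and `ℓ ≥ 3`.  Then `n_E ≡ n_O ≡ 0 (mod ℓ^f − 1)`; if
`ℓ = 3` then additionally `n_∅ ≡ n_{{0,…,f−1}} ≡ (3^f−1)/2`; and for distinct
`B₁ ≠ B₂`, `n_{B₁} ≡ n_{B₂} (mod ℓ^f − 1)` iff `{B₁,B₂} = {E,O}`, or `ℓ = 3`
and `{B₁,B₂} = {∅,{0,…,f−1}}`. -/
theorem stmt13 (ℓ f : ℕ) (hℓ : ℓ.Prime) (hℓ3 : 3 ≤ ℓ) (hf : 0 < f)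
    (hfe : Even f) :
    Int.ModEq ((ℓ : ℤ) ^ f - 1) (nB ℓ f (evens f)) 0 ∧
    Int.ModEq ((ℓ : ℤ) ^ f - 1) (nB ℓ f (odds f)) 0 ∧
    (ℓ = 3 →
      Int.ModEq ((ℓ : ℤ) ^ f - 1) (nB ℓ f ∅) (((ℓ : ℤ) ^ f - 1) / 2) ∧
      Int.ModEq ((ℓ : ℤ) ^ f - 1) (nB ℓ f Finset.univ) (((ℓ : ℤ) ^ f - 1) / 2)) ∧
    (∀ B₁ B₂ : Finset (Fin f), B₁ ≠ B₂ →
      (Int.ModEq ((ℓ : ℤ) ^ f - 1) (nB ℓ f B₁) (nB ℓ f B₂) ↔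
        ((B₁ = evens f ∧ B₂ = odds f) ∨ (B₁ = odds f ∧ B₂ = evens f) ∨
          (ℓ = 3 ∧ ((B₁ = ∅ ∧ B₂ = Finset.univ) ∨
            (B₁ = Finset.univ ∧ B₂ = ∅)))))) := by
  have hx : (3 : ℤ) ≤ (ℓ : ℤ) := by exact_mod_cast hℓ3
  set x : ℤ := (ℓ : ℤ) with hxdef
  obtain ⟨m, hmm⟩ := hfe
  have hm2 : f = 2 * m := by omega
  have hm0 : 0 < m := by omega
  have hfe' : Even f := ⟨m, hmm⟩
  set E : ℤ := ∑ k ∈ Finset.range m, x ^ (2 * k) with hE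
  have hf2 : f / 2 = m := by omega
  have hSe : Sf x (evens f) = E := by
    unfold Sf; rw [sum_evens_eq x f hfe', hf2]
  have hSo : Sf x (odds f) = x * E := by
    unfold Sf; rw [sum_odds_eq x f hfe', hf2, hE, Finset.mul_sum]
    exact Finset.sum_congr rfl fun k _ => by ring
  have hcompl : (evens f)ᶜ = odds f := by
    ext i; simp [evens, odds]
  set T : ℤ := Sf x Finset.univ with hT
  have hsplit : ∀ B : Finset (Fin f), Sf x B + Sf x Bᶜ = T :=
    fun B => Finset.sum_add_sum_compl B _
  have hTE : T = (x + 1) * E := by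
    have h1 := hsplit (evens f)
    rw [hcompl, hSe, hSo] at h1
    linarith
  have hnB : ∀ B : Finset (Fin f), nB ℓ f B = (x + 1) * Sf x B - T := by
    intro B
    have h1 := hsplit B
    have h2 : ∑ i ∈ B, x ^ ((i : ℕ) + 1) = x * Sf x B := by
      unfold Sf; rw [Finset.mul_sum]
      exact Finset.sum_congr rfl fun i _ => by rw [pow_succ]; ring
    have h3 : nB ℓ f B = ∑ i ∈ B, x ^ ((i : ℕ) + 1) - Sf x Bᶜ := rfl
    rw [h3, h2]
    linarith
  have hME : x ^ f - 1 = (x + 1) * ((x - 1) * E) := by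
    have hg := geom_sum_mul (x ^ 2) m
    have hxx : E = ∑ k ∈ Finset.range m, (x ^ 2) ^ k := by
      rw [hE]; exact Finset.sum_congr rfl fun k _ => by rw [← pow_mul]
    have hpm : x ^ f = (x ^ 2) ^ m := by rw [hm2, pow_mul]
    rw [hpm, ← hg, hxx]
    ring
  have hE1 : 1 ≤ E := by
    have h0 : (0 : ℕ) ∈ Finset.range m := Finset.mem_range.mpr hm0
    have := Finset.single_le_sum (f := fun k => x ^ (2 * k))
      (fun k _ => pow_nonneg (by linarith) _) h0
    simpa [hE] using this
  have hMpos : 0 < x ^ f - 1 := by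
    have h1 : x - 1 ≤ (x - 1) * E := le_mul_of_one_le_right (by linarith) hE1
    have h2 : (x + 1) * (x - 1) ≤ (x + 1) * ((x - 1) * E) :=
      mul_le_mul_of_nonneg_left h1 (by linarith)
    nlinarith [hME, hx, h2]
  have hS0 : ∀ B : Finset (Fin f), 0 ≤ Sf x B :=
    fun B => Finset.sum_nonneg fun i _ => pow_nonneg (by linarith) _
  have hST : ∀ B : Finset (Fin f), Sf x B ≤ T := by
    intro B
    have := hS0 Bᶜ
    have := hsplit B
    linarith
  have hSzero : ∀ B : Finset (Fin f), Sf x B = 0 → B = ∅ := by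
    intro B h
    by_contra hne
    have hpos : 0 < Sf x B := Finset.sum_pos (fun i _ => pow_pos (by linarith) _)
      (Finset.nonempty_iff_ne_empty.mpr hne)
    linarith
  have hSuniv : ∀ B : Finset (Fin f), Sf x B = T → B = Finset.univ := by
    intro B h
    have h1 := hsplit B
    have h2 : Sf x Bᶜ = 0 := by linarith
    have := hSzero _ h2
    rwa [Finset.compl_eq_empty_iff] at this
  have hSsum : ∀ B : Finset (Fin f),
      Sf x B = ∑ i : Fin f, (if i ∈ B then (1 : ℤ) else 0) * x ^ (i : ℕ) := by
    intro B
    unfold Sf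
    simp only [ite_mul, one_mul, zero_mul, Finset.sum_ite_mem, Finset.univ_inter]
  have key : ∀ B₁ B₂ C₁ C₂ : Finset (Fin f), Sf x B₁ + Sf x C₁ = Sf x B₂ + Sf x C₂ →
      ∀ i : Fin f, ((if i ∈ B₁ then 1 else 0) + (if i ∈ C₁ then 1 else 0) : ℕ)
        = (if i ∈ B₂ then 1 else 0) + (if i ∈ C₂ then 1 else 0) := by
    intro B₁ B₂ C₁ C₂ h i
    have hab := digits_fin ℓ f (by omega)
      (fun i => (if i ∈ B₁ then 1 else 0) + (if i ∈ C₁ then 1 else 0))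
      (fun i => (if i ∈ B₂ then 1 else 0) + (if i ∈ C₂ then 1 else 0))
      (fun i => by beta_reduce; split_ifs <;> omega)
      (fun i => by beta_reduce; split_ifs <;> omega) ?_
    · exact congrFun hab i
    · rw [← hxdef]
      have hrw : ∀ (D C : Finset (Fin f)),
          ∑ j : Fin f, (((if j ∈ D then 1 else 0) + (if j ∈ C then 1 else 0) : ℕ) : ℤ)
            * x ^ (j : ℕ) = Sf x D + Sf x C := by
        intro D C
        rw [hSsum D, hSsum C, ← Finset.sum_add_distrib]
        refine Finset.sum_congr rfl fun j _ => ?_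
        push_cast
        split_ifs <;> ring
      rw [hrw, hrw, h]
  have hmemE : ∀ i : Fin f, (i ∈ evens f ↔ Even (i : ℕ)) := by
    intro i; simp [evens]
  have hmemO : ∀ i : Fin f, (i ∈ odds f ↔ ¬ Even (i : ℕ)) := by
    intro i; simp [odds]
  have main : ∀ B₁ B₂ : Finset (Fin f), B₁ ≠ B₂ →
      Int.ModEq (x ^ f - 1) (nB ℓ f B₁) (nB ℓ f B₂) →
      ((B₁ = evens f ∧ B₂ = odds f) ∨ (B₁ = odds f ∧ B₂ = evens f) ∨
        (ℓ = 3 ∧ ((B₁ = ∅ ∧ B₂ = Finset.univ) ∨ (B₁ = Finset.univ ∧ B₂ = ∅)))) := by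
    intro B₁ B₂ hne hmod
    have hdvd : (x ^ f - 1) ∣ (x + 1) * (Sf x B₁ - Sf x B₂) := by
      have h1 : (x ^ f - 1) ∣ nB ℓ f B₁ - nB ℓ f B₂ := Int.ModEq.dvd hmod.symm
      have h2 : nB ℓ f B₁ - nB ℓ f B₂ = (x + 1) * (Sf x B₁ - Sf x B₂) := by
        rw [hnB B₁, hnB B₂]; ring
      rwa [h2] at h1
    obtain ⟨k, hk⟩ := hdvd
    have hDk : Sf x B₁ - Sf x B₂ = (x - 1) * E * k := by
      have h1 : (x + 1) * (Sf x B₁ - Sf x B₂) = (x + 1) * ((x - 1) * E * k) := by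
        rw [hk, hME]; ring
      exact mul_left_cancel₀ (by linarith) h1
    have hDne : Sf x B₁ - Sf x B₂ ≠ 0 := by
      intro h0
      apply hne
      have hSeq : Sf x B₁ + Sf x (∅ : Finset (Fin f)) = Sf x B₂ + Sf x (∅ : Finset (Fin f)) := by
        have : Sf x B₁ = Sf x B₂ := by linarith
        rw [this]
      have hk2 := key B₁ B₂ ∅ ∅ hSeq
      ext i
      have h := hk2 i
      simp only [Finset.notMem_empty, if_false] at h
      constructor <;> intro hi <;> by_contra hni <;> simp [hi, hni] at h
    have hb1 : Sf x B₁ - Sf x B₂ ≤ (x + 1) * E := by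
      have := hST B₁; have := hS0 B₂; rw [← hTE]; linarith
    have hb2 : -((x + 1) * E) ≤ Sf x B₁ - Sf x B₂ := by
      have := hST B₂; have := hS0 B₁; rw [← hTE]; linarith
    have hk0 : k ≠ 0 := by
      rintro rfl
      apply hDne
      rw [hDk]; ring
    have hxE : (0 : ℤ) ≤ (x - 1) * E := by nlinarith
    have hkle : k ≤ 2 := by
      by_contra hk3
      push_neg at hk3
      have h3 : (x - 1) * E * 3 ≤ (x - 1) * E * k :=
        mul_le_mul_of_nonneg_left (by omega) hxE
      rw [← hDk] at h3
      nlinarith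
    have hkge : -2 ≤ k := by
      by_contra hk3
      push_neg at hk3
      have h3 : (x - 1) * E * k ≤ (x - 1) * E * (-3) :=
        mul_le_mul_of_nonneg_left (by omega) hxE
      rw [← hDk] at h3
      nlinarith
    have hl3of : (x = 3) → ℓ = 3 := by
      intro h; rw [hxdef] at h; exact_mod_cast h
    have hcase1 : ∀ B₁' B₂' : Finset (Fin f), Sf x B₁' - Sf x B₂' = (x - 1) * E →
        B₁' = odds f ∧ B₂' = evens f := by
      intro B₁' B₂' hD
      have hSeq : Sf x B₁' + Sf x (evens f) = Sf x B₂' + Sf x (odds f) := by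
        rw [hSe, hSo]; linarith
      have hk2 := key B₁' B₂' (evens f) (odds f) hSeq
      have hmem : ∀ i : Fin f, (i ∈ B₁' ↔ ¬ Even (i : ℕ)) ∧ (i ∈ B₂' ↔ Even (i : ℕ)) := by
        intro i
        have h := hk2 i
        by_cases hp : Even (i : ℕ)
        · rw [if_pos ((hmemE i).mpr hp), if_neg (fun hc => (hmemO i).mp hc hp)] at h
          constructor
          · constructor
            · intro hi; exfalso; rw [if_pos hi] at h; split_ifs at h <;> omega
            · intro hc; exact absurd hp hc
          · constructor
            · intro _; exact hp
            · intro _; by_contra hni; rw [if_neg hni] at h; split_ifs at h <;> omega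
        · rw [if_neg (fun hc => hp ((hmemE i).mp hc)), if_pos ((hmemO i).mpr hp)] at h
          constructor
          · constructor
            · intro _; exact hp
            · intro _; by_contra hni; rw [if_neg hni] at h; split_ifs at h <;> omega
          · constructor
            · intro hi; exfalso; rw [if_pos hi] at h; split_ifs at h <;> omega
            · intro hc; exact absurd hc hp
      constructor
      · ext i; rw [hmemO i]; exact (hmem i).1
      · ext i; rw [hmemE i]; exact (hmem i).2
    have hcase2 : ∀ B₁' B₂' : Finset (Fin f), Sf x B₁' - Sf x B₂' = (x - 1) * E * 2 →
        ℓ = 3 ∧ B₁' = Finset.univ ∧ B₂' = ∅ := by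
      intro B₁' B₂' hD
      have hb1' : Sf x B₁' - Sf x B₂' ≤ (x + 1) * E := by
        have := hST B₁'; have := hS0 B₂'; rw [← hTE]; linarith
      have h9 : (x - 3) * E ≤ 0 := by nlinarith [hD, hb1']
      have h10 : (x - 3) * 1 ≤ (x - 3) * E := mul_le_mul_of_nonneg_left hE1 (by linarith)
      have hx3 : x = 3 := by linarith
      have hDT : Sf x B₁' - Sf x B₂' = T := by rw [hTE, hD, hx3]; ring
      have hS2 : Sf x B₂' = 0 := by
        have := hST B₁'; have := hS0 B₂'; linarith
      have hS1 : Sf x B₁' = T := by linarith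
      exact ⟨hl3of hx3, hSuniv _ hS1, hSzero _ hS2⟩
    interval_cases k
    · have hres := hcase2 B₂ B₁ (by linarith [hDk])
      exact Or.inr (Or.inr ⟨hres.1, Or.inl ⟨hres.2.2, hres.2.1⟩⟩)
    · have hres := hcase1 B₂ B₁ (by linarith [hDk])
      exact Or.inl ⟨hres.2, hres.1⟩
    · exact absurd rfl hk0
    · have hres := hcase1 B₁ B₂ (by linarith [hDk])
      exact Or.inr (Or.inl hres)
    · have hres := hcase2 B₁ B₂ (by linarith [hDk])
      exact Or.inr (Or.inr ⟨hres.1, Or.inr hres.2⟩)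
  have hSempty : Sf x (∅ : Finset (Fin f)) = 0 := by simp [Sf]
  refine ⟨?_, ?_, ?_, ?_⟩
  · have h0 : nB ℓ f (evens f) = 0 := by rw [hnB, hSe, hTE]; ring
    rw [h0]
  · have h0 : nB ℓ f (odds f) = x ^ f - 1 := by rw [hnB, hSo, hTE, hME]; ring
    exact Int.modEq_zero_iff_dvd.mpr (h0 ▸ dvd_refl _)
  · intro hl3
    have hx3 : x = 3 := by rw [hxdef, hl3]; norm_num
    have hM2T : x ^ f - 1 = 2 * T := by rw [hME, hTE, hx3]; ring
    have hdiv : (x ^ f - 1) / 2 = T := by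
      rw [hM2T]; exact Int.mul_ediv_cancel_left T (by norm_num)
    constructor
    · rw [hdiv]
      have h0 : nB ℓ f (∅ : Finset (Fin f)) = -T := by rw [hnB, hSempty]; ring
      rw [h0, Int.modEq_iff_dvd]
      exact ⟨1, by linarith⟩
    · rw [hdiv]
      have h0 : nB ℓ f (Finset.univ : Finset (Fin f)) = x * T := by
        rw [hnB]; ring
      rw [h0, Int.modEq_iff_dvd]
      exact ⟨-1, by rw [hx3] at hM2T ⊢; linarith⟩
  · intro B₁ B₂ hne
    constructor
    · exact main B₁ B₂ hne
    · rintro (⟨rfl, rfl⟩ | ⟨rfl, rfl⟩ | ⟨hl3, (⟨rfl, rfl⟩ | ⟨rfl, rfl⟩)⟩)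
      · rw [Int.modEq_iff_dvd]
        have h0 : nB ℓ f (odds f) - nB ℓ f (evens f) = x ^ f - 1 := by
          rw [hnB, hnB, hSe, hSo, hTE, hME]; ring
        exact h0 ▸ dvd_refl _
      · rw [Int.modEq_iff_dvd]
        have h0 : nB ℓ f (evens f) - nB ℓ f (odds f) = -(x ^ f - 1) := by
          rw [hnB, hnB, hSe, hSo, hTE, hME]; ring
        exact h0 ▸ dvd_neg.mpr (dvd_refl _)
      · have hx3 : x = 3 := by rw [hxdef, hl3]; norm_num
        rw [Int.modEq_iff_dvd]
        have h0 : nB ℓ f (Finset.univ : Finset (Fin f)) - nB ℓ f (∅ : Finset (Fin f))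
            = (x + 1) * T := by rw [hnB, hnB, hSempty]; ring
        refine ⟨2, ?_⟩
        rw [h0, hME, hTE, hx3]; ring
      · have hx3 : x = 3 := by rw [hxdef, hl3]; norm_num
        rw [Int.modEq_iff_dvd]
        have h0 : nB ℓ f (∅ : Finset (Fin f)) - nB ℓ f (Finset.univ : Finset (Fin f))
            = -((x + 1) * T) := by rw [hnB, hnB, hSempty]; ring
        refine ⟨-2, ?_⟩
        rw [h0, hME, hTE, hx3]; ring

end Stmt13
end

section
/- Suppose ℓ = 2 and f is even. Then 3 divides n_B for every subset B of {0,1,…,f−1}; the residue class 0 mod 2^f − 1 is of the form n_B mod 2^f − 1 for exactly 4 subsets B; and each of the (2^f − 4)/3 nonzero residue classes modulo 2^f − 1 that are divisible by 3 is of the form n_B mod 2^f − 1 for exactly 3 subsets B. -/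
/-!
Writing `S(B) = ∑_{i ∈ B} 2^i`, one has `n_B = 3 S(B) - (2^f - 1)`, and for even `f` we have
`2^f - 1 = 3N`. Hence `n_B = 3 (S(B) - N)`, and `n_B ≡ 3m [ZMOD 3N]` iff `S(B) ≡ m [ZMOD N]`.
By binary expansion `S` is a bijection onto `[0, 2^f) = [0, 3N + 1)`, an interval containing
four multiples of `N` and three elements of every other residue class modulo `N`.
-/

namespace Stmt14

/-- `n_B = ∑_{i∈B} 2^{i+1} − ∑_{i∉B} 2^i`. -/
def nB (f : ℕ) (B : Finset (Fin f)) : ℤ :=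
  ∑ i ∈ B, (2 : ℤ) ^ ((i : ℕ) + 1) - ∑ i ∈ Bᶜ, (2 : ℤ) ^ (i : ℕ)

open Finset

section TwoPowSum

variable {f : ℕ}

def twoPowSum (B : Finset (Fin f)) : ℕ := ∑ i ∈ B, 2 ^ (i : ℕ)

lemma twoPowSum_eq_sum_map (B : Finset (Fin f)) :
    twoPowSum B = ∑ i ∈ B.map Fin.valEmbedding, 2 ^ i := by
  rw [sum_map]; rfl

lemma twoPowSum_injective : Function.Injective (twoPowSum (f := f)) := by
  intro B C h
  apply map_injective Fin.valEmbedding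
  apply geomSum_injective le_rfl
  simpa only [twoPowSum_eq_sum_map] using h

lemma twoPowSum_lt (B : Finset (Fin f)) : twoPowSum B < 2 ^ f := by
  rw [twoPowSum_eq_sum_map]
  exact Nat.geomSum_lt le_rfl (by simp)

lemma image_twoPowSum_univ : univ.image (twoPowSum (f := f)) = range (2 ^ f) := by
  refine eq_of_subset_of_card_le (fun s hs => ?_) ?_
  · obtain ⟨B, -, rfl⟩ := mem_image.1 hs
    exact mem_range.2 (twoPowSum_lt B)
  · rw [card_image_of_injective _ twoPowSum_injective, card_univ, Fintype.card_finset,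
      Fintype.card_fin, card_range]

lemma card_filter_twoPowSum (p : ℕ → Prop) [DecidablePred p] :
    #{B : Finset (Fin f) | p (twoPowSum B)} = Nat.count p (2 ^ f) := by
  rw [Nat.count_eq_card_filter_range, ← image_twoPowSum_univ, filter_image,
    card_image_of_injective _ twoPowSum_injective]

lemma card_twoPowSum_modEq {N : ℕ} (hN0 : 0 < N) (hN : 2 ^ f = 3 * N + 1) (r : ℕ) :
    #{B : Finset (Fin f) | twoPowSum B ≡ r [MOD N]} = if N ∣ r then 4 else 3 := by
  rw [card_filter_twoPowSum (· ≡ r [MOD N]), hN, Nat.count_modEq_card _ hN0]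
  obtain rfl | hN1 := eq_or_lt_of_le (Nat.one_le_iff_ne_zero.2 hN0.ne')
  · simp
  · have hdiv : (3 * N + 1) / N = 3 := by
      rw [mul_comm, Nat.mul_add_div hN0, Nat.div_eq_of_lt hN1]
    have hmod : (3 * N + 1) % N = 1 := by
      rw [mul_comm, Nat.mul_add_mod, Nat.mod_eq_of_lt hN1]
    simp only [hdiv, hmod, Nat.dvd_iff_mod_eq_zero]
    split_ifs <;> omega

end TwoPowSum

lemma sum_two_pow_univ (f : ℕ) : ∑ i : Fin f, (2 : ℤ) ^ (i : ℕ) = 2 ^ f - 1 := by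
  rw [Fin.sum_univ_eq_sum_range (fun i => (2 : ℤ) ^ i)]
  simpa using geom_sum_mul (2 : ℤ) f

lemma nB_eq (f : ℕ) (B : Finset (Fin f)) : nB f B = 3 * twoPowSum B - (2 ^ f - 1) := by
  have hcompl := sum_add_sum_compl B (fun i : Fin f => (2 : ℤ) ^ (i : ℕ))
  rw [sum_two_pow_univ] at hcompl
  simp only [nB, twoPowSum, pow_succ, ← sum_mul, Nat.cast_sum, Nat.cast_pow, Nat.cast_ofNat]
  linarith

lemma exists_two_pow_eq_three_mul_add_one {f : ℕ} (hf : Even f) : ∃ N, 2 ^ f = 3 * N + 1 := by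
  obtain ⟨k, rfl⟩ := hf
  have h : 2 ^ (k + k) % 3 = 1 := by
    rw [← two_mul, pow_mul, Nat.pow_mod]
    norm_num
  exact ⟨2 ^ (k + k) / 3, by omega⟩

lemma two_pow_sub_one_eq_three_mul {f N : ℕ} (hN : 2 ^ f = 3 * N + 1) :
    (2 : ℤ) ^ f - 1 = 3 * N := by
  rw [sub_eq_iff_eq_add]; exact_mod_cast hN

lemma nB_modEq_iff {f N : ℕ} (hN : (2 : ℤ) ^ f - 1 = 3 * N) (B : Finset (Fin f)) (m : ℤ) :
    nB f B ≡ 3 * m [ZMOD 2 ^ f - 1] ↔ (twoPowSum B : ℤ) ≡ m [ZMOD N] := by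
  rw [nB_eq, hN, Int.modEq_iff_dvd, Int.modEq_iff_dvd,
    show 3 * m - (3 * twoPowSum B - 3 * N) = 3 * (m - twoPowSum B + N) by ring,
    mul_dvd_mul_iff_left three_ne_zero, dvd_add_left (dvd_refl _)]

lemma ncard_nB_modEq {f N : ℕ} (hN0 : 0 < N) (hN : 2 ^ f = 3 * N + 1) (m : ℤ) :
    {B : Finset (Fin f) | nB f B ≡ 3 * m [ZMOD 2 ^ f - 1]}.ncard
      = if (N : ℤ) ∣ m then 4 else 3 := by
  obtain ⟨r, hr⟩ : ∃ r : ℕ, m ≡ r [ZMOD N] :=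
    ⟨(m % N).toNat, by
      rw [Int.toNat_of_nonneg (Int.emod_nonneg _ (by exact_mod_cast hN0.ne'))]
      exact (Int.mod_modEq _ _).symm⟩
  have hset : {B : Finset (Fin f) | nB f B ≡ 3 * m [ZMOD 2 ^ f - 1]}
      = {B | twoPowSum B ≡ r [MOD N]} := by
    ext B
    rw [Set.mem_ofPred_eq, Set.mem_ofPred_eq, nB_modEq_iff (two_pow_sub_one_eq_three_mul hN),
      ← Int.natCast_modEq_iff]
    exact ⟨fun h => h.trans hr, fun h => h.trans hr.symm⟩
  rw [hset, Set.ncard_eq_toFinset_card', Set.toFinset_ofPred, card_twoPowSum_modEq hN0 hN]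
  simp only [hr.dvd_iff, Int.natCast_dvd_natCast]

/-- Suppose `ℓ = 2` and `f` is even.  Then `3 ∣ n_B` for every `B`; the class
`0 mod 2^f − 1` arises as `n_B` for exactly `4` subsets `B`; and each nonzero
class modulo `2^f − 1` divisible by `3` arises as `n_B` for exactly `3`
subsets `B`. -/
theorem stmt14 (f : ℕ) (hf : 0 < f) (hfe : Even f) :
    (∀ B : Finset (Fin f), (3 : ℤ) ∣ nB f B) ∧
    {B : Finset (Fin f) | Int.ModEq ((2 : ℤ) ^ f - 1) (nB f B) 0}.ncard = 4 ∧
    (∀ m : ℤ, ¬ Int.ModEq ((2 : ℤ) ^ f - 1) m 0 → (3 : ℤ) ∣ m →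
      {B : Finset (Fin f) |
        Int.ModEq ((2 : ℤ) ^ f - 1) (nB f B) m}.ncard = 3) := by
  obtain ⟨N, hN⟩ := exists_two_pow_eq_three_mul_add_one hfe
  have hN0 : 0 < N := by
    have := Nat.one_lt_two_pow hf.ne'
    omega
  have hNZ := two_pow_sub_one_eq_three_mul hN
  refine ⟨fun B => ⟨twoPowSum B - N, by rw [nB_eq, hNZ]; ring⟩, ?_, ?_⟩
  · simpa using ncard_nB_modEq hN0 hN 0
  · rintro _ hm ⟨k, rfl⟩
    rw [ncard_nB_modEq hN0 hN, if_neg]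
    rintro ⟨t, rfl⟩
    exact hm (Int.modEq_zero_iff_dvd.2 ⟨t, by rw [hNZ]; ring⟩)

end Stmt14
end

section
/- Suppose ℓ > 3 is prime. If f is odd, then the residue classes −1 + (ℓ+1)·s(B*) mod ℓ^f − 1 are pairwise distinct and nonzero as B* runs through all subsets of {0,1,…,f−1}. If f is even, then the residue classes (ℓ+1)·s(B*) mod ℓ^f − 1 are pairwise distinct and nonzero as B* runs through all nonempty proper subsets of {0,1,…,f−1}. Letting A denote the set of such residue classes in each case, for all integers n₁, n₂ with n = n₁ − n₂ one has: M(n₁,n₂) = 2^f + 2 if n ≡ 0 (mod ℓ^f − 1) and f is even; M(n₁,n₂) = 2^f + 1 if the class of n mod ℓ^f − 1 lies in A; and M(n₁,n₂) = 2^f otherwise. -/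
namespace Stmt15

/-- `s(B*) = ∑_{i∈B*} (−1)^i ℓ^i`. -/
def sAlt (ℓ f : ℕ) (B : Finset (Fin f)) : ℤ :=
  ∑ i ∈ B, (-1 : ℤ) ^ (i : ℕ) * (ℓ : ℤ) ^ (i : ℕ)

/-- The set `T(n₁,n₂)` of triples `(a,b,B)` with `a ∈ {0,…,ℓ^f−2}`,
`b ∈ {1,…,ℓ}^f`, `B ⊆ {0,…,f−1}`, with
`n₁ ≡ a + ∑_{i∈B} b_i ℓ^i` and `n₂ ≡ a + ∑_{i∉B} b_i ℓ^i (mod ℓ^f−1)`. -/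
def Tset2 (ℓ f : ℕ) (n₁ n₂ : ℤ) : Set (ℤ × (Fin f → ℤ) × Finset (Fin f)) :=
  {x | (0 ≤ x.1 ∧ x.1 ≤ (ℓ : ℤ) ^ f - 2) ∧
    (∀ i, 1 ≤ x.2.1 i ∧ x.2.1 i ≤ (ℓ : ℤ)) ∧
    Int.ModEq ((ℓ : ℤ) ^ f - 1) n₁
      (x.1 + ∑ i ∈ x.2.2, x.2.1 i * (ℓ : ℤ) ^ (i : ℕ)) ∧
    Int.ModEq ((ℓ : ℤ) ^ f - 1) n₂
      (x.1 + ∑ i ∈ x.2.2ᶜ, x.2.1 i * (ℓ : ℤ) ^ (i : ℕ))}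

/-- The class of `n mod ℓ^f − 1` lies in the set `A` of the statement:
if `f` is odd, `A` consists of the classes `−1 + (ℓ+1)s(B*)` for all subsets
`B*`; if `f` is even, of the classes `(ℓ+1)s(B*)` for nonempty proper `B*`. -/
def inA (ℓ f : ℕ) (n : ℤ) : Prop :=
  (Odd f ∧ ∃ B : Finset (Fin f),
      Int.ModEq ((ℓ : ℤ) ^ f - 1) n (-1 + ((ℓ : ℤ) + 1) * sAlt ℓ f B)) ∨
  (Even f ∧ ∃ B : Finset (Fin f), B.Nonempty ∧ B ≠ Finset.univ ∧
      Int.ModEq ((ℓ : ℤ) ^ f - 1) n (((ℓ : ℤ) + 1) * sAlt ℓ f B))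

open Finset in
open Finset

/-- Digit lemma: a signed-digit representation of 0 with digits bounded by `L-1` is zero. -/
lemma digits_zero (L : ℤ) (hL : 2 ≤ L) :
    ∀ (f : ℕ) (d : Fin f → ℤ), (∀ i, |d i| ≤ L - 1) →
      (∑ i, d i * L ^ (i : ℕ)) = 0 → ∀ i, d i = 0 := by
  intro f
  induction f with
  | zero => intro d _ _ i; exact absurd i.2 (by simp)
  | succ f ih =>
    intro d hd hsum
    have hs : (∑ i : Fin (f+1), d i * L ^ (i : ℕ))
        = d 0 + L * ∑ i : Fin f, d i.succ * L ^ (i : ℕ) := by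
      rw [Fin.sum_univ_succ, Finset.mul_sum]
      simp only [Fin.val_zero, pow_zero, mul_one, Fin.val_succ]
      congr 1
      refine Finset.sum_congr rfl fun j _ => by ring
    rw [hs] at hsum
    have hdvd : L ∣ d 0 := ⟨-(∑ i : Fin f, d i.succ * L ^ (i : ℕ)), by linarith⟩
    have h0 : d 0 = 0 := Int.eq_zero_of_abs_lt_dvd hdvd (lt_of_le_of_lt (hd 0) (by linarith))
    have hS : (∑ i : Fin f, d i.succ * L ^ (i : ℕ)) = 0 := by
      have h : L * ∑ i : Fin f, d i.succ * L ^ (i : ℕ) = 0 := by linarith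
      exact (mul_eq_zero.mp h).resolve_left (by linarith)
    have hrec := ih (fun i => d i.succ) (fun i => hd i.succ) hS
    intro j
    rcases Fin.eq_zero_or_eq_succ j with h | ⟨k, hk⟩
    · rw [h]; exact h0
    · rw [hk]; exact hrec k

/-- Card of a filter is invariant under an involution of the ambient finset. -/
lemma card_filter_invol {α : Type*} (s : Finset α) (φ : α → α)
    (hs : ∀ x ∈ s, φ x ∈ s) (hφ : ∀ x ∈ s, φ (φ x) = x)
    (P : α → Prop) [DecidablePred P] :
    (s.filter fun x => P (φ x)).card = (s.filter P).card := by
  refine Finset.card_bij' (fun x _ => φ x) (fun x _ => φ x) ?_ ?_ ?_ ?_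
  · intro a ha
    rw [Finset.mem_filter] at ha ⊢
    exact ⟨hs a ha.1, ha.2⟩
  · intro a ha
    rw [Finset.mem_filter] at ha ⊢
    refine ⟨hs a ha.1, ?_⟩
    rw [hφ a ha.1]; exact ha.2
  · intro a ha; exact hφ a (Finset.mem_filter.mp ha).1
  · intro a ha; exact hφ a (Finset.mem_filter.mp ha).1

/-- Counting solutions of a congruence in a closed interval of length `q`. -/
lemma card_Icc_dvd (q a m : ℤ) (hq : 0 < q) :
    ((Finset.Icc a (a + q)).filter fun x => q ∣ m - x).card
      = 1 + (if q ∣ m - a then 1 else 0) := by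
  have key : (Finset.Icc a (a + q)).filter (fun x => q ∣ m - x)
      = if q ∣ m - a then ({a, a + q} : Finset ℤ) else {a + (m - a) % q} := by
    ext x
    simp only [Finset.mem_filter, Finset.mem_Icc]
    split_ifs with hdv
    · simp only [Finset.mem_insert, Finset.mem_singleton]
      constructor
      · rintro ⟨⟨h1, h2⟩, h3⟩
        have hxa : q ∣ x - a := by
          have : x - a = (m - a) - (m - x) := by ring
          rw [this]; exact dvd_sub hdv h3
        rcases eq_or_lt_of_le h2 with h | h
        · right; exact h
        · left
          have h0 : x - a = 0 := Int.eq_zero_of_abs_lt_dvd hxa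
            (abs_lt.mpr ⟨by linarith, by linarith⟩)
          linarith
      · rintro (rfl | rfl)
        · exact ⟨⟨le_refl _, by linarith⟩, hdv⟩
        · refine ⟨⟨by linarith, le_refl _⟩, ?_⟩
          have : m - (a + q) = (m - a) - q := by ring
          rw [this]; exact dvd_sub hdv dvd_rfl
    · simp only [Finset.mem_singleton]
      have hmod0 : 0 ≤ (m - a) % q := Int.emod_nonneg _ (ne_of_gt hq)
      have hmodq : (m - a) % q < q := Int.emod_lt_of_pos _ hq
      constructor
      · rintro ⟨⟨h1, h2⟩, h3⟩
        have hxa : q ∣ (m - a) - (x - a) := by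
          have : (m - a) - (x - a) = m - x := by ring
          rw [this]; exact h3
        have hxlt : x - a < q := by
          rcases eq_or_lt_of_le h2 with h | h
          · exfalso
            apply hdv
            have : m - a = (m - x) + q := by rw [h]; ring
            rw [this]; exact dvd_add h3 dvd_rfl
          · linarith
        have : (m - a) % q = x - a := by
          have e1 : (x - a) % q = (m - a) % q := Int.modEq_iff_dvd.mpr hxa
          rw [← e1, Int.emod_eq_of_lt (by linarith) hxlt]
        omega
      · rintro rfl
        refine ⟨⟨by linarith, by linarith⟩, ?_⟩
        have : m - (a + (m - a) % q) = (m - a) - (m - a) % q := by ring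
        rw [this, Int.emod_def]
        ring_nf
        exact Dvd.intro _ rfl
  rw [key]
  split_ifs with hdv
  · rw [Finset.card_insert_of_notMem (by simp; linarith), Finset.card_singleton]
  · rw [Finset.card_singleton]

/-- `s0 L f = ∑_{i<f} L^i`. -/
def s0 (L : ℤ) (f : ℕ) : ℤ := ∑ i ∈ Finset.range f, L ^ i

lemma geom_id (L : ℤ) (f : ℕ) : (L - 1) * s0 L f = L ^ f - 1 := by
  rw [s0, mul_comm]; exact geom_sum_mul L f

lemma sumOdd_id (L : ℤ) (f : ℕ) :
    (L + 1) * (∑ i ∈ Finset.range f, if Odd i then L ^ i else 0)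
      = L * s0 L f - (if Even f then 0 else L ^ f) := by
  induction f with
  | zero => simp [s0]
  | succ f ih =>
    rcases Nat.even_or_odd f with he | ho
    · have hof : ¬ Odd f := Nat.not_odd_iff_even.mpr he
      have hef1 : ¬ Even (f + 1) := by simp [Nat.even_add_one, he]
      rw [Finset.sum_range_succ, if_neg hof, s0, Finset.sum_range_succ, ← s0,
        if_neg hef1, if_pos he] at *
      rw [pow_succ]
      linear_combination ih
    · have hef : ¬ Even f := Nat.not_even_iff_odd.mpr ho
      rw [Finset.sum_range_succ, if_pos ho, s0, Finset.sum_range_succ, ← s0,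
        if_pos (Nat.even_add_one.mpr hef), if_neg hef] at *
      linear_combination ih

lemma alt_id (L : ℤ) (f : ℕ) :
    (L + 1) * (∑ i ∈ Finset.range f, (-1) ^ i * L ^ i) = 1 - (-1) ^ f * L ^ f := by
  have h := geom_sum_mul (-L) f
  have he : ∀ i : ℕ, (-L) ^ i = (-1) ^ i * L ^ i := fun i => by
    rw [neg_eq_neg_one_mul, mul_pow]
  rw [Finset.sum_congr rfl (fun i _ => he i), he] at h
  nlinarith [h]

lemma count_V (ℓ f : ℕ) (hℓ : 2 ≤ ℓ) (hf : 0 < f) (m : ℤ) :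
    ((Fintype.piFinset fun _ : Fin f => Finset.Icc (1 : ℤ) (ℓ : ℤ)).filter
        fun b => ((ℓ : ℤ) ^ f - 1) ∣ m - ∑ i : Fin f, b i * (ℓ : ℤ) ^ (i : ℕ)).card
      = 1 + if ((ℓ : ℤ) ^ f - 1) ∣ m - s0 (ℓ : ℤ) f then 1 else 0 := by
  set L : ℤ := (ℓ : ℤ) with hL
  have hL2 : (2 : ℤ) ≤ L := by rw [hL]; exact_mod_cast hℓ
  set q : ℤ := L ^ f - 1 with hqdef
  have hq : 0 < q := by
    have : (1 : ℤ) < L ^ f := one_lt_pow₀ (by linarith) hf.ne'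
    simp only [hqdef]; linarith
  set Bb := Fintype.piFinset fun _ : Fin f => Finset.Icc (1 : ℤ) L with hBb
  set V : (Fin f → ℤ) → ℤ := fun b => ∑ i : Fin f, b i * L ^ (i : ℕ) with hV
  have hinj : Set.InjOn V Bb := by
    intro b hb b' hb' hbb
    rw [Finset.mem_coe, Fintype.mem_piFinset] at hb hb'
    have hbb' : (∑ i : Fin f, b i * L ^ (i : ℕ)) = ∑ i : Fin f, b' i * L ^ (i : ℕ) := hbb
    have hsum : (∑ i, (b i - b' i) * L ^ (i : ℕ)) = 0 := by
      rw [Finset.sum_congr rfl (fun i (_ : i ∈ Finset.univ) => sub_mul (b i) (b' i) (L ^ (i:ℕ))),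
        Finset.sum_sub_distrib, hbb', sub_self]
    have := digits_zero L hL2 f (fun i => b i - b' i)
      (fun i => by
        show |b i - b' i| ≤ L - 1
        have h1 := Finset.mem_Icc.mp (hb i)
        have h2 := Finset.mem_Icc.mp (hb' i)
        rw [abs_le]; constructor <;> linarith) hsum
    funext i
    have hi : b i - b' i = 0 := this i
    linarith
  have hcardBb : Bb.card = ℓ ^ f := by
    rw [hBb, Fintype.card_piFinset]
    have hc : (Finset.Icc (1:ℤ) L).card = ℓ := by
      rw [Int.card_Icc, hL]
      simp
    simp [hc]
  have hLs : L * s0 L f = s0 L f + q := by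
    have := geom_id L f
    simp only [hqdef]; linarith
  have hs0pos : 1 ≤ s0 L f := by
    rw [s0]
    calc (1:ℤ) = ∑ i ∈ Finset.range 1, L ^ i := by simp
    _ ≤ _ := Finset.sum_le_sum_of_subset_of_nonneg
        (Finset.range_subset_range.mpr hf) (fun i _ _ => pow_nonneg (by linarith) i)
  have himg : Bb.image V = Finset.Icc (s0 L f) (s0 L f + q) := by
    apply Finset.eq_of_subset_of_card_le
    · intro x hx
      rw [Finset.mem_image] at hx
      obtain ⟨b, hb, rfl⟩ := hx
      rw [Fintype.mem_piFinset] at hb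
      rw [Finset.mem_Icc]
      constructor
      · rw [s0, ← Fin.sum_univ_eq_sum_range (fun i => L ^ i) f]
        apply Finset.sum_le_sum
        intro i _
        have := (Finset.mem_Icc.mp (hb i)).1
        nlinarith [pow_nonneg (by linarith : (0:ℤ) ≤ L) (i : ℕ)]
      · rw [← hLs]
        calc V b ≤ ∑ i : Fin f, L * L ^ (i : ℕ) := by
              apply Finset.sum_le_sum
              intro i _
              have := (Finset.mem_Icc.mp (hb i)).2
              nlinarith [pow_nonneg (by linarith : (0:ℤ) ≤ L) (i : ℕ)]
        _ = L * s0 L f := by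
              rw [← Finset.mul_sum, s0, ← Fin.sum_univ_eq_sum_range (fun i => L ^ i) f]
    · rw [Finset.card_image_of_injOn hinj, hcardBb, Int.card_Icc]
      have : s0 L f + q + 1 - s0 L f = L ^ f := by simp only [hqdef]; ring
      rw [this, hL, ← Nat.cast_pow, Int.toNat_natCast]
  have step1 : (Bb.filter fun b => q ∣ m - V b).card
      = ((Bb.image V).filter fun x => q ∣ m - x).card := by
    rw [Finset.filter_image, Finset.card_image_of_injOn
      (hinj.mono (by exact_mod_cast Finset.filter_subset _ _))]
  have final : (Bb.filter fun b => q ∣ m - V b).card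
      = 1 + if q ∣ m - s0 L f then 1 else 0 := by
    rw [step1, himg, card_Icc_dvd q _ m hq]
  exact final

lemma sAlt_eq (ℓ f : ℕ) (B : Finset (Fin f)) :
    sAlt ℓ f B = ∑ i : Fin f,
      (if i ∈ B then (1:ℤ) else 0) * (-1 : ℤ) ^ (i : ℕ) * (ℓ : ℤ) ^ (i : ℕ) := by
  rw [sAlt]
  have h := Finset.sum_ite_mem Finset.univ B (fun i : Fin f => (-1:ℤ)^(i:ℕ) * (ℓ:ℤ)^(i:ℕ))
  rw [Finset.univ_inter] at h
  rw [← h]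
  refine Finset.sum_congr rfl fun i _ => by split_ifs <;> ring

lemma sAlt_sub (ℓ f : ℕ) (B₁ B₂ : Finset (Fin f)) :
    sAlt ℓ f B₁ - sAlt ℓ f B₂ = ∑ i : Fin f,
      (((if i ∈ B₁ then (1:ℤ) else 0) - (if i ∈ B₂ then 1 else 0)) * (-1 : ℤ) ^ (i : ℕ))
        * (ℓ : ℤ) ^ (i : ℕ) := by
  rw [sAlt_eq, sAlt_eq, ← Finset.sum_sub_distrib]
  refine Finset.sum_congr rfl fun i _ => by ring

lemma delta_eq (ℓ f : ℕ) (hℓ5 : 5 ≤ ℓ) (B₁ B₂ : Finset (Fin f)) (c : Fin f → ℤ)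
    (hc : ∀ i, |c i| ≤ 1)
    (h : sAlt ℓ f B₁ - sAlt ℓ f B₂
      = ∑ i : Fin f, c i * (-1 : ℤ) ^ (i : ℕ) * (ℓ : ℤ) ^ (i : ℕ)) :
    ∀ i, ((if i ∈ B₁ then (1:ℤ) else 0) - (if i ∈ B₂ then 1 else 0)) = c i := by
  have hL5 : (5 : ℤ) ≤ (ℓ : ℤ) := by exact_mod_cast hℓ5
  rw [sAlt_sub] at h
  have hsum : (∑ i : Fin f,
      ((((if i ∈ B₁ then (1:ℤ) else 0) - (if i ∈ B₂ then 1 else 0)) - c i) * (-1 : ℤ) ^ (i : ℕ))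
        * (ℓ : ℤ) ^ (i : ℕ)) = 0 := by
    have h1 : (∑ i : Fin f,
        ((((if i ∈ B₁ then (1:ℤ) else 0) - (if i ∈ B₂ then 1 else 0)) - c i) * (-1 : ℤ) ^ (i : ℕ))
          * (ℓ : ℤ) ^ (i : ℕ))
        = (∑ i : Fin f,
            (((if i ∈ B₁ then (1:ℤ) else 0) - (if i ∈ B₂ then 1 else 0)) * (-1 : ℤ) ^ (i : ℕ))
              * (ℓ : ℤ) ^ (i : ℕ))
          - ∑ i : Fin f, c i * (-1 : ℤ) ^ (i : ℕ) * (ℓ : ℤ) ^ (i : ℕ) := by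
      rw [← Finset.sum_sub_distrib]
      refine Finset.sum_congr rfl fun i _ => by ring
    rw [h1, h, sub_self]
  have key := digits_zero (ℓ : ℤ) (by linarith) f _
    (fun i => by
      show |(((if i ∈ B₁ then (1:ℤ) else 0) - (if i ∈ B₂ then 1 else 0)) - c i)
        * (-1 : ℤ) ^ (i : ℕ)| ≤ (ℓ : ℤ) - 1
      rw [abs_mul, abs_pow, abs_neg, abs_one, one_pow, mul_one]
      have h1 := hc i
      have h2 : |((if i ∈ B₁ then (1:ℤ) else 0) - (if i ∈ B₂ then 1 else 0))| ≤ 1 := by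
        split_ifs <;> simp
      calc |_| ≤ _ := abs_sub _ _
      _ ≤ (ℓ:ℤ) - 1 := by linarith) hsum
  intro i
  have hi := key i
  have h0 : ((-1 : ℤ) ^ (i : ℕ)) ≠ 0 := pow_ne_zero _ (by norm_num)
  have := mul_eq_zero.mp hi
  rcases this with h | h
  · linarith [sub_eq_zero.mp h]
  · exact absurd h h0

lemma mem_of_delta_one {f : ℕ} (B₁ B₂ : Finset (Fin f)) (i : Fin f)
    (h : (if i ∈ B₁ then (1:ℤ) else 0) - (if i ∈ B₂ then 1 else 0) = 1) :
    i ∈ B₁ ∧ i ∉ B₂ := by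
  by_cases h₁ : i ∈ B₁ <;> by_cases h₂ : i ∈ B₂
  · rw [if_pos h₁, if_pos h₂] at h; norm_num at h
  · exact ⟨h₁, h₂⟩
  · rw [if_neg h₁, if_pos h₂] at h; norm_num at h
  · rw [if_neg h₁, if_neg h₂] at h; norm_num at h

lemma eq_of_delta_zero {f : ℕ} (B₁ B₂ : Finset (Fin f))
    (h : ∀ i, (if i ∈ B₁ then (1:ℤ) else 0) - (if i ∈ B₂ then 1 else 0) = 0) :
    B₁ = B₂ := by
  ext i
  have hi := h i
  by_cases h₁ : i ∈ B₁ <;> by_cases h₂ : i ∈ B₂ <;>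
    simp only [h₁, h₂, if_pos, if_neg, iff_true, iff_false] <;>
    first
      | (intro hcon; rw [if_pos h₁, if_neg h₂] at hi; norm_num at hi)
      | (rw [if_neg h₁, if_pos h₂] at hi; norm_num at hi)
      | tauto

lemma core (ℓ f : ℕ) (hℓ5 : 5 ≤ ℓ) (hf : 0 < f) (B₁ B₂ : Finset (Fin f)) (e : ℤ)
    (he : |e| ≤ 1)
    (h : ((ℓ:ℤ) ^ f - 1) ∣ ((ℓ:ℤ) + 1) * (sAlt ℓ f B₁ - sAlt ℓ f B₂) + e) :
    e = 0 ∧ (B₁ = B₂ ∨ (Even f ∧ ((B₁ = Finset.univ ∧ B₂ = ∅) ∨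
      (B₁ = ∅ ∧ B₂ = Finset.univ)))) := by
  set L : ℤ := (ℓ : ℤ) with hLdef
  have hL5 : (5 : ℤ) ≤ L := by rw [hLdef]; exact_mod_cast hℓ5
  set q : ℤ := L ^ f - 1 with hqdef
  have hgeom : (L - 1) * s0 L f = q := geom_id L f
  have hs0 : 1 ≤ s0 L f := by
    rw [s0]
    calc (1:ℤ) = ∑ i ∈ Finset.range 1, L ^ i := by simp
    _ ≤ _ := Finset.sum_le_sum_of_subset_of_nonneg
        (Finset.range_subset_range.mpr hf) (fun i _ _ => pow_nonneg (by linarith) i)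
  have hq : 0 < q := by nlinarith
  set D : ℤ := sAlt ℓ f B₁ - sAlt ℓ f B₂ with hDdef
  -- bound on D
  have hDabs : |D| ≤ s0 L f := by
    rw [hDdef, sAlt_sub]
    calc |∑ i : Fin f, (((if i ∈ B₁ then (1:ℤ) else 0) - (if i ∈ B₂ then 1 else 0))
            * (-1 : ℤ) ^ (i : ℕ)) * L ^ (i : ℕ)|
        ≤ ∑ i : Fin f, |(((if i ∈ B₁ then (1:ℤ) else 0) - (if i ∈ B₂ then 1 else 0))
            * (-1 : ℤ) ^ (i : ℕ)) * L ^ (i : ℕ)| := Finset.abs_sum_le_sum_abs _ _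
    _ ≤ ∑ i : Fin f, L ^ (i : ℕ) := by
        refine Finset.sum_le_sum fun i _ => ?_
        rw [abs_mul, abs_mul, abs_pow, abs_pow, abs_neg, abs_one, one_pow, mul_one,
          abs_of_nonneg (by linarith : (0:ℤ) ≤ L)]
        have : |((if i ∈ B₁ then (1:ℤ) else 0) - (if i ∈ B₂ then 1 else 0))| ≤ 1 := by
          split_ifs <;> simp
        nlinarith [pow_nonneg (by linarith : (0:ℤ) ≤ L) (i:ℕ), pow_pos (by linarith : (0:ℤ) < L) (i:ℕ)]
    _ = s0 L f := Fin.sum_univ_eq_sum_range (fun i => L ^ i) f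
  obtain ⟨k, hk⟩ := h
  -- |k| ≤ 1
  have hkabs : |k| ≤ 1 := by
    by_contra hcon
    push_neg at hcon
    have h2 : 2 ≤ |k| := hcon
    have : 2 * q ≤ q * |k| := by nlinarith
    have habs : |q * k| = q * |k| := by rw [abs_mul, abs_of_nonneg (le_of_lt hq)]
    have hle : |q * k| ≤ (L + 1) * s0 L f + 1 := by
      rw [← hk]
      calc |(L + 1) * D + e| ≤ |(L+1) * D| + |e| := abs_add_le _ _
      _ ≤ (L+1) * |D| + 1 := by rw [abs_mul, abs_of_nonneg (by linarith : (0:ℤ) ≤ L+1)]; linarith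
      _ ≤ (L + 1) * s0 L f + 1 := by nlinarith
    nlinarith
  -- mod (L+1) analysis
  have hLm : (L : ℤ) ≡ -1 [ZMOD (L + 1)] := Int.modEq_iff_dvd.mpr ⟨-1, by ring⟩
  have hq' : (q : ℤ) ≡ (-1) ^ f - 1 [ZMOD (L + 1)] := (hLm.pow f).sub_right 1
  have hqk : (q * k : ℤ) ≡ e [ZMOD (L + 1)] :=
    Int.modEq_iff_dvd.mpr ⟨-D, by rw [← hk]; ring⟩
  have h3 : ((-1 : ℤ) ^ f - 1) * k ≡ e [ZMOD (L + 1)] := ((hq'.mul_right k).symm).trans hqk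
  obtain ⟨hka, hkb⟩ := abs_le.mp hkabs
  have hk3 : k = -1 ∨ k = 0 ∨ k = 1 := by omega
  obtain ⟨hea, heb⟩ := abs_le.mp he
  rcases Nat.even_or_odd f with hef | hof
  · -- f even
    have hpow : ((-1 : ℤ) ^ f) = 1 := Even.neg_one_pow hef
    rw [hpow] at h3
    have he0 : e = 0 := by
      have hdvd : (L + 1) ∣ e := by
        have := Int.ModEq.dvd h3
        simpa using this
      exact Int.eq_zero_of_abs_lt_dvd hdvd (by linarith)
    subst he0
    refine ⟨rfl, ?_⟩
    rw [add_zero] at hk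
    have hAlt : (L + 1) * (∑ i : Fin f, (-1:ℤ) ^ (i:ℕ) * L ^ (i:ℕ)) = -q := by
      have h1 := alt_id L f
      rw [hpow, one_mul] at h1
      rw [Fin.sum_univ_eq_sum_range (fun i => (-1:ℤ) ^ i * L ^ i) f, hqdef]
      linarith
    have hDsum : ∀ c : ℤ, k = -c → D = ∑ i : Fin f, c * (-1:ℤ) ^ (i:ℕ) * L ^ (i:ℕ) := by
      intro c hkc
      have hmul : (L + 1) * D = (L + 1) * ∑ i : Fin f, c * (-1:ℤ) ^ (i:ℕ) * L ^ (i:ℕ) := by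
        rw [hk]
        have h2 : (∑ i : Fin f, c * (-1:ℤ) ^ (i:ℕ) * L ^ (i:ℕ))
            = c * ∑ i : Fin f, (-1:ℤ) ^ (i:ℕ) * L ^ (i:ℕ) := by
          rw [Finset.mul_sum]
          exact Finset.sum_congr rfl fun i _ => by ring
        rw [h2, hkc]
        linear_combination (-c) * hAlt
      exact mul_left_cancel₀ (by linarith) hmul
    rcases hk3 with rfl | rfl | rfl
    · -- k = -1 : B₁ = univ, B₂ = ∅
      right
      refine ⟨hef, Or.inl ?_⟩
      have hdel := delta_eq ℓ f hℓ5 B₁ B₂ (fun _ => (1:ℤ)) (fun i => by norm_num)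
        (hDsum 1 (by norm_num))
      have hmem : ∀ i, i ∈ B₁ ∧ i ∉ B₂ := fun i => mem_of_delta_one B₁ B₂ i (hdel i)
      constructor
      · ext i; simp [(hmem i).1]
      · ext i; simp [(hmem i).2]
    · -- k = 0
      left
      have hD0 : D = 0 := by
        have h0 : (L + 1) * D = 0 := by rw [hk]; ring
        exact (mul_eq_zero.mp h0).resolve_left (by linarith)
      exact eq_of_delta_zero B₁ B₂ (delta_eq ℓ f hℓ5 B₁ B₂ (fun _ => 0)
        (fun i => by norm_num) (by rw [← hDdef, hD0]; simp))
    · -- k = 1 : B₁ = ∅, B₂ = univ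
      right
      refine ⟨hef, Or.inr ?_⟩
      have hdel := delta_eq ℓ f hℓ5 B₁ B₂ (fun _ => (-1:ℤ)) (fun i => by norm_num)
        (hDsum (-1) (by norm_num))
      have hmem : ∀ i, i ∈ B₂ ∧ i ∉ B₁ := fun i => by
        have hi : ((if i ∈ B₁ then (1:ℤ) else 0) - if i ∈ B₂ then 1 else 0) = -1 := hdel i
        refine mem_of_delta_one B₂ B₁ i ?_
        linarith
      constructor
      · ext i; simp [(hmem i).2]
      · ext i; simp [(hmem i).1]
  · -- f odd
    have hpow : ((-1 : ℤ) ^ f) = -1 := Odd.neg_one_pow hof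
    rw [hpow] at h3
    have hdvd : (L + 1) ∣ e + 2 * k := by
      have hdd := Int.ModEq.dvd h3
      have h4 : e - (-1 - 1) * k = e + 2 * k := by ring
      rwa [h4] at hdd
    have hek : e + 2 * k = 0 := Int.eq_zero_of_abs_lt_dvd hdvd
      (by
        have : |e + 2 * k| ≤ |e| + 2 * |k| := by
          calc |e + 2*k| ≤ |e| + |2*k| := abs_add_le _ _
          _ = |e| + 2 * |k| := by rw [abs_mul]; norm_num
        linarith)
    have hke : k = 0 ∧ e = 0 := by omega
    obtain ⟨rfl, rfl⟩ := hke
    refine ⟨rfl, Or.inl ?_⟩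
    have hD0 : D = 0 := by
      have h0 : (L + 1) * D = 0 := by linarith
      exact (mul_eq_zero.mp h0).resolve_left (by linarith)
    exact eq_of_delta_zero B₁ B₂ (delta_eq ℓ f hℓ5 B₁ B₂ (fun _ => 0)
      (fun i => by norm_num) (by rw [← hDdef, hD0]; simp))

lemma count_B (ℓ f : ℕ) (hℓ : 2 ≤ ℓ) (hf : 0 < f) (n : ℤ) (B : Finset (Fin f)) :
    ((Fintype.piFinset fun _ : Fin f => Finset.Icc (1:ℤ) (ℓ:ℤ)).filter
        (fun b => ((ℓ:ℤ)^f - 1) ∣ n - ((∑ i ∈ B, b i * (ℓ:ℤ)^(i:ℕ))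
          - ∑ i ∈ Bᶜ, b i * (ℓ:ℤ)^(i:ℕ)))).card
      = 1 + if ((ℓ:ℤ)^f - 1) ∣ n - (s0 (ℓ:ℤ) f - ((ℓ:ℤ)+1) * ∑ i ∈ Bᶜ, (ℓ:ℤ)^(i:ℕ))
          then 1 else 0 := by
  set L : ℤ := (ℓ : ℤ) with hLdef
  have hL2 : (2 : ℤ) ≤ L := by rw [hLdef]; exact_mod_cast hℓ
  set q : ℤ := L ^ f - 1 with hqdef
  set Bb := Fintype.piFinset fun _ : Fin f => Finset.Icc (1 : ℤ) L with hBb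
  set φ : (Fin f → ℤ) → (Fin f → ℤ) := fun b i => if i ∈ B then b i else L + 1 - b i with hφ
  have hmaps : ∀ b ∈ Bb, φ b ∈ Bb := by
    intro b hb
    rw [hBb, Fintype.mem_piFinset] at hb ⊢
    intro i
    have := Finset.mem_Icc.mp (hb i)
    rw [Finset.mem_Icc]
    by_cases hi : i ∈ B
    · simp only [hφ, if_pos hi]; exact ⟨this.1, this.2⟩
    · simp only [hφ, if_neg hi]; constructor <;> linarith [this.1, this.2]
  have hinv : ∀ b ∈ Bb, φ (φ b) = b := by
    intro b _
    funext i
    by_cases hi : i ∈ B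
    · simp only [hφ, if_pos hi]
    · simp only [hφ, if_neg hi]; ring
  have hg : ∀ b : Fin f → ℤ,
      ((∑ i ∈ B, φ b i * L^(i:ℕ)) - ∑ i ∈ Bᶜ, φ b i * L^(i:ℕ))
        = (∑ i : Fin f, b i * L^(i:ℕ)) - (L+1) * ∑ i ∈ Bᶜ, L^(i:ℕ) := by
    intro b
    have h1 : (∑ i ∈ B, φ b i * L^(i:ℕ)) = ∑ i ∈ B, b i * L^(i:ℕ) :=
      Finset.sum_congr rfl fun i hi => by simp only [hφ, if_pos hi]
    have h2 : (∑ i ∈ Bᶜ, φ b i * L^(i:ℕ))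
        = ((L+1) * ∑ i ∈ Bᶜ, L^(i:ℕ)) - ∑ i ∈ Bᶜ, b i * L^(i:ℕ) := by
      rw [Finset.mul_sum, ← Finset.sum_sub_distrib]
      refine Finset.sum_congr rfl fun i hi => ?_
      have hni : i ∉ B := Finset.mem_compl.mp hi
      simp only [hφ, if_neg hni]; ring
    rw [h1, h2, ← Finset.sum_add_sum_compl B (fun i => b i * L^(i:ℕ))]
    ring
  have step1 := card_filter_invol Bb φ hmaps hinv
    (fun b => q ∣ n - ((∑ i ∈ B, b i * L^(i:ℕ)) - ∑ i ∈ Bᶜ, b i * L^(i:ℕ)))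
  rw [← step1]
  have step2 : (Bb.filter fun b => q ∣ n - ((∑ i ∈ B, φ b i * L^(i:ℕ))
        - ∑ i ∈ Bᶜ, φ b i * L^(i:ℕ))).card
      = (Bb.filter fun b => q ∣ (n + (L+1) * ∑ i ∈ Bᶜ, L^(i:ℕ))
        - ∑ i : Fin f, b i * L^(i:ℕ)).card := by
    congr 1
    refine Finset.filter_congr fun b _ => ?_
    rw [hg b]
    constructor <;> intro hd <;> [skip; skip] <;>
      · have heq : n - ((∑ i : Fin f, b i * L^(i:ℕ)) - (L+1) * ∑ i ∈ Bᶜ, L^(i:ℕ))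
            = (n + (L+1) * ∑ i ∈ Bᶜ, L^(i:ℕ)) - ∑ i : Fin f, b i * L^(i:ℕ) := by ring
        first
          | (rwa [heq] at hd)
          | (rwa [← heq] at hd)
  rw [step2, count_V ℓ f hℓ hf (n + (L+1) * ∑ i ∈ Bᶜ, L^(i:ℕ))]
  congr 1
  have heq2 : (n + (L+1) * ∑ i ∈ Bᶜ, L^(i:ℕ)) - s0 L f
      = n - (s0 L f - (L+1) * ∑ i ∈ Bᶜ, L^(i:ℕ)) := by ring
  rw [heq2]

/-- The set of odd positions. -/
def Oset (f : ℕ) : Finset (Fin f) := Finset.univ.filter (fun i => Odd (i : ℕ))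

/-- `c_f`: the constant in the residue classes. -/
def cf (f : ℕ) : ℤ := if Even f then 0 else -1

lemma dB_symmDiff (ℓ f : ℕ) (B : Finset (Fin f)) :
    ((ℓ:ℤ)^f - 1) ∣ (s0 (ℓ:ℤ) f - ((ℓ:ℤ)+1) * ∑ i ∈ (symmDiff B (Oset f))ᶜ, (ℓ:ℤ)^(i:ℕ))
      - (cf f + ((ℓ:ℤ)+1) * sAlt ℓ f B) := by
  set L : ℤ := (ℓ : ℤ) with hLdef
  have hcompl : (∑ i ∈ (symmDiff B (Oset f))ᶜ, L^(i:ℕ))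
      = s0 L f - ∑ i ∈ symmDiff B (Oset f), L^(i:ℕ) := by
    have := Finset.sum_add_sum_compl (symmDiff B (Oset f)) (fun i : Fin f => L^(i:ℕ))
    have huniv : (∑ i : Fin f, L^(i:ℕ)) = s0 L f :=
      Fin.sum_univ_eq_sum_range (fun i => L ^ i) f
    linarith [this, huniv]
  have hsplit : (∑ i ∈ symmDiff B (Oset f), L^(i:ℕ))
      = (∑ i : Fin f, if Odd (i:ℕ) then L^(i:ℕ) else 0) + sAlt ℓ f B := by
    rw [sAlt_eq]
    have hmem := Finset.sum_ite_mem Finset.univ (symmDiff B (Oset f))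
      (fun i : Fin f => L^(i:ℕ))
    rw [Finset.univ_inter] at hmem
    rw [← hmem, ← Finset.sum_add_distrib]
    refine Finset.sum_congr rfl fun i _ => ?_
    have hO : i ∈ Oset f ↔ Odd (i:ℕ) := by simp [Oset]
    by_cases hB : i ∈ B <;> rcases Nat.even_or_odd (i:ℕ) with hpar | hpar
    · -- i ∈ B, even
      have h1 : i ∈ symmDiff B (Oset f) := Finset.mem_symmDiff.mpr
        (Or.inl ⟨hB, fun hc => (Nat.not_odd_iff_even.mpr hpar) (hO.mp hc)⟩)
      rw [if_pos h1, if_neg (Nat.not_odd_iff_even.mpr hpar), if_pos hB,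
        Even.neg_one_pow hpar]
      ring
    · -- i ∈ B, odd
      have h1 : i ∉ symmDiff B (Oset f) := by
        rw [Finset.mem_symmDiff]
        push_neg
        exact ⟨fun _ => hO.mpr hpar, fun _ => hB⟩
      rw [if_neg h1, if_pos hpar, if_pos hB, Odd.neg_one_pow hpar]
      ring
    · -- i ∉ B, even
      have h1 : i ∉ symmDiff B (Oset f) := by
        rw [Finset.mem_symmDiff]
        push_neg
        exact ⟨fun hc => absurd hc hB, fun hc => absurd (hO.mp hc) (Nat.not_odd_iff_even.mpr hpar)⟩
      rw [if_neg h1, if_neg (Nat.not_odd_iff_even.mpr hpar), if_neg hB]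
      ring
    · -- i ∉ B, odd
      have h1 : i ∈ symmDiff B (Oset f) := Finset.mem_symmDiff.mpr
        (Or.inr ⟨hO.mpr hpar, hB⟩)
      rw [if_pos h1, if_pos hpar, if_neg hB]
      ring
  have hodd := sumOdd_id L f
  have hoddfin : (∑ i : Fin f, if Odd (i:ℕ) then L^(i:ℕ) else 0)
      = ∑ i ∈ Finset.range f, if Odd i then L^i else 0 :=
    Fin.sum_univ_eq_sum_range (fun i => if Odd i then L^i else 0) f
  have key : (s0 L f - (L+1) * ∑ i ∈ (symmDiff B (Oset f))ᶜ, L^(i:ℕ))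
      - (cf f + (L+1) * sAlt ℓ f B)
      = (if Even f then 0 else -(L^f - 1)) := by
    rw [hcompl, hsplit, cf]
    rcases Nat.even_or_odd f with hef | hof
    · rw [if_pos hef, if_pos hef] at *
      rw [hoddfin]
      linear_combination hodd
    · rw [if_neg (Nat.not_even_iff_odd.mpr hof), if_neg (Nat.not_even_iff_odd.mpr hof)] at *
      rw [hoddfin]
      linear_combination hodd
  rw [key]
  split_ifs
  · exact dvd_zero _
  · exact Dvd.dvd.neg_right dvd_rfl

lemma count_main (ℓ f : ℕ) (hℓ : 2 ≤ ℓ) (hf : 0 < f) (n₁ n₂ : ℤ) :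
    (Tset2 ℓ f n₁ n₂).ncard
      = 2 ^ f + (Finset.univ.filter (fun B : Finset (Fin f) =>
          ((ℓ:ℤ)^f - 1) ∣ (n₁ - n₂) - (cf f + ((ℓ:ℤ)+1) * sAlt ℓ f B))).card := by
  set L : ℤ := (ℓ : ℤ) with hLdef
  have hL2 : (2 : ℤ) ≤ L := by rw [hLdef]; exact_mod_cast hℓ
  set q : ℤ := L ^ f - 1 with hqdef
  have hq : 0 < q := by
    have : (1 : ℤ) < L ^ f := one_lt_pow₀ (by linarith) hf.ne'
    simp only [hqdef]; linarith
  set n : ℤ := n₁ - n₂ with hndef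
  set Bb := Fintype.piFinset fun _ : Fin f => Finset.Icc (1 : ℤ) L with hBb
  set gv : (Fin f → ℤ) × Finset (Fin f) → ℤ := fun p =>
    (∑ i ∈ p.2, p.1 i * L^(i:ℕ)) - ∑ i ∈ p.2ᶜ, p.1 i * L^(i:ℕ) with hgv
  set S : Finset ((Fin f → ℤ) × Finset (Fin f)) :=
    (Bb ×ˢ Finset.univ).filter (fun p => q ∣ n - gv p) with hS
  set F : (Fin f → ℤ) × Finset (Fin f) → ℤ × (Fin f → ℤ) × Finset (Fin f) :=
    fun p => ((n₁ - ∑ i ∈ p.2, p.1 i * L^(i:ℕ)) % q, p.1, p.2) with hF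
  -- Step A : Tset2 = F '' S
  have stepA : Tset2 ℓ f n₁ n₂ = F '' ↑S := by
    ext x
    simp only [Tset2, Set.mem_setOf_eq, Set.mem_image, Finset.mem_coe]
    constructor
    · rintro ⟨⟨ha0, ha1⟩, hb, h1, h2⟩
      refine ⟨(x.2.1, x.2.2), ?_, ?_⟩
      · rw [hS, Finset.mem_filter, Finset.mem_product]
        refine ⟨⟨?_, Finset.mem_univ _⟩, ?_⟩
        · rw [hBb, Fintype.mem_piFinset]
          intro i
          rw [Finset.mem_Icc]
          exact hb i
        · have hmod := (h1.sub h2).symm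
          have hd := Int.modEq_iff_dvd.mp hmod
          have heq : (n₁ - n₂) - ((x.1 + ∑ i ∈ x.2.2, x.2.1 i * L^(i:ℕ))
              - (x.1 + ∑ i ∈ x.2.2ᶜ, x.2.1 i * L^(i:ℕ)))
              = n - gv (x.2.1, x.2.2) := by
            simp only [hgv, hndef]; ring
          rwa [heq] at hd
      · have h1' := h1.sub_right (∑ i ∈ x.2.2, x.2.1 i * L^(i:ℕ))
        rw [add_sub_cancel_right] at h1'
        have hmod : (n₁ - ∑ i ∈ x.2.2, x.2.1 i * L^(i:ℕ)) % q = x.1 % q := h1'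
        have haq : x.1 % q = x.1 := Int.emod_eq_of_lt ha0 (by rw [hqdef]; linarith)
        simp only [hF]
        have hfst : (n₁ - ∑ i ∈ x.2.2, x.2.1 i * L^(i:ℕ)) % q = x.1 := by
          rw [hmod, haq]
        rw [hfst]
    · rintro ⟨p, hmem, rfl⟩
      obtain ⟨b, B⟩ := p
      rw [hS, Finset.mem_filter, Finset.mem_product] at hmem
      obtain ⟨⟨hb, -⟩, hdvd⟩ := hmem
      rw [hBb, Fintype.mem_piFinset] at hb
      have hb' : ∀ i, 1 ≤ b i ∧ b i ≤ L := fun i => Finset.mem_Icc.mp (hb i)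
      simp only [hF]
      set a₀ : ℤ := (n₁ - ∑ i ∈ B, b i * L^(i:ℕ)) % q with ha₀
      have ha0 : 0 ≤ a₀ := Int.emod_nonneg _ (ne_of_gt hq)
      have ha1 : a₀ < q := Int.emod_lt_of_pos _ hq
      have e1 : Int.ModEq q (n₁ - ∑ i ∈ B, b i * L^(i:ℕ)) a₀ :=
        (Int.emod_emod_of_dvd _ dvd_rfl).symm
      have h1 : Int.ModEq q n₁ (a₀ + ∑ i ∈ B, b i * L^(i:ℕ)) := by
        have h1'' := e1.add_right (∑ i ∈ B, b i * L^(i:ℕ))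
        rwa [sub_add_cancel] at h1''
      refine ⟨⟨ha0, by rw [hqdef] at ha1; linarith⟩, hb', h1, ?_⟩
      have hng : Int.ModEq q n (gv (b, B)) := by
        rw [Int.modEq_iff_dvd]
        rw [show gv (b, B) - n = -(n - gv (b, B)) from by ring]
        exact dvd_neg.mpr hdvd
      have h2 := h1.sub hng
      have heq : n₁ - n = n₂ := by rw [hndef]; ring
      have heq2 : (a₀ + ∑ i ∈ B, b i * L^(i:ℕ)) - gv (b, B)
          = a₀ + ∑ i ∈ Bᶜ, b i * L^(i:ℕ) := by simp only [hgv]; ring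
      rwa [heq, heq2] at h2
  -- Step B : ncard = S.card
  have hinj : Function.Injective F := by
    intro p p' h
    have h2 : (p.1, p.2) = (p'.1, p'.2) := congrArg Prod.snd h
    have h3 := Prod.ext_iff.mp h2
    exact Prod.ext_iff.mpr ⟨h3.1, h3.2⟩
  have stepB : (Tset2 ℓ f n₁ n₂).ncard = S.card := by
    rw [stepA, Set.ncard_image_of_injective _ hinj, Set.ncard_coe_finset]
  -- Step C : fiberwise
  have stepC : S.card = ∑ B : Finset (Fin f),
      (Bb.filter fun b => q ∣ n - ((∑ i ∈ B, b i * L^(i:ℕ))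
        - ∑ i ∈ Bᶜ, b i * L^(i:ℕ))).card := by
    rw [Finset.card_eq_sum_card_fiberwise
      (f := fun p : (Fin f → ℤ) × Finset (Fin f) => p.2) (t := Finset.univ)
      (fun x _ => Finset.mem_univ _)]
    refine Finset.sum_congr rfl fun B _ => ?_
    refine Finset.card_bij' (fun p _ => p.1) (fun b _ => (b, B)) ?_ ?_ ?_ ?_
    · intro p hp
      rw [Finset.mem_filter] at hp
      obtain ⟨hpS, hpB⟩ := hp
      rw [hS, Finset.mem_filter, Finset.mem_product] at hpS
      rw [Finset.mem_filter]
      refine ⟨hpS.1.1, ?_⟩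
      have hx := hpS.2
      simp only [hgv] at hx
      rwa [hpB] at hx
    · intro b hbm
      rw [Finset.mem_filter] at hbm
      rw [Finset.mem_filter, hS, Finset.mem_filter, Finset.mem_product]
      exact ⟨⟨⟨hbm.1, Finset.mem_univ _⟩, hbm.2⟩, rfl⟩
    · intro p hp
      rw [Finset.mem_filter] at hp
      exact Prod.ext_iff.mpr ⟨rfl, hp.2.symm⟩
    · intro b _
      rfl
  -- Step D : apply count_B
  have stepD : (∑ B : Finset (Fin f),
      (Bb.filter fun b => q ∣ n - ((∑ i ∈ B, b i * L^(i:ℕ))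
        - ∑ i ∈ Bᶜ, b i * L^(i:ℕ))).card)
      = 2 ^ f + (Finset.univ.filter (fun B : Finset (Fin f) =>
          q ∣ n - (s0 L f - (L+1) * ∑ i ∈ Bᶜ, L^(i:ℕ)))).card := by
    have hpt : ∀ B : Finset (Fin f),
        (Bb.filter fun b => q ∣ n - ((∑ i ∈ B, b i * L^(i:ℕ))
          - ∑ i ∈ Bᶜ, b i * L^(i:ℕ))).card
        = 1 + if q ∣ n - (s0 L f - (L+1) * ∑ i ∈ Bᶜ, L^(i:ℕ)) then 1 else 0 :=
      fun B => count_B ℓ f hℓ hf n B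
    rw [Finset.sum_congr rfl fun B _ => hpt B, Finset.sum_add_distrib,
      Finset.sum_const, Finset.card_univ, smul_eq_mul, mul_one, ← Finset.card_filter]
    congr 1
    rw [Fintype.card_finset, Fintype.card_fin]
  -- Step E : reindex by symmDiff with Oset
  have stepE : (Finset.univ.filter (fun B : Finset (Fin f) =>
        q ∣ n - (s0 L f - (L+1) * ∑ i ∈ Bᶜ, L^(i:ℕ)))).card
      = (Finset.univ.filter (fun B : Finset (Fin f) =>
          q ∣ n - (cf f + (L+1) * sAlt ℓ f B))).card := by
    have hinvol := card_filter_invol (Finset.univ : Finset (Finset (Fin f)))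
      (fun B => symmDiff B (Oset f)) (fun B _ => Finset.mem_univ _)
      (fun B _ => symmDiff_symmDiff_cancel_right (Oset f) B)
      (fun B => q ∣ n - (s0 L f - (L+1) * ∑ i ∈ Bᶜ, L^(i:ℕ)))
    rw [← hinvol]
    refine congrArg Finset.card (Finset.filter_congr fun B _ => ?_)
    have hd := dB_symmDiff ℓ f B
    rw [← hLdef, ← hqdef] at hd
    constructor
    · intro h
      have h2 := dvd_add h hd
      rwa [show (n - (s0 L f - (L + 1) * ∑ i ∈ (symmDiff B (Oset f))ᶜ, L ^ (i:ℕ)))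
        + ((s0 L f - (L+1) * ∑ i ∈ (symmDiff B (Oset f))ᶜ, L^(i:ℕ))
          - (cf f + (L+1) * sAlt ℓ f B))
        = n - (cf f + (L+1) * sAlt ℓ f B) from by ring] at h2
    · intro h
      have h2 := dvd_sub h hd
      rwa [show (n - (cf f + (L+1) * sAlt ℓ f B))
        - ((s0 L f - (L+1) * ∑ i ∈ (symmDiff B (Oset f))ᶜ, L^(i:ℕ))
          - (cf f + (L+1) * sAlt ℓ f B))
        = n - (s0 L f - (L + 1) * ∑ i ∈ (symmDiff B (Oset f))ᶜ, L ^ (i:ℕ)) from by ring] at h2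
  rw [stepB, stepC, stepD, stepE]

lemma sAlt_empty (ℓ f : ℕ) : sAlt ℓ f ∅ = 0 := by simp [sAlt]

lemma sAlt_univ (ℓ f : ℕ) (hef : Even f) :
    ((ℓ:ℤ) + 1) * sAlt ℓ f Finset.univ = -((ℓ:ℤ)^f - 1) := by
  have h1 : sAlt ℓ f Finset.univ = ∑ i ∈ Finset.range f, (-1:ℤ)^i * (ℓ:ℤ)^i := by
    rw [sAlt]
    exact Fin.sum_univ_eq_sum_range (fun i => (-1:ℤ)^i * (ℓ:ℤ)^i) f
  rw [h1, alt_id, Even.neg_one_pow hef]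
  ring

/-- Suppose `ℓ > 3` is prime.  If `f` is odd the classes
`−1 + (ℓ+1)s(B*) mod ℓ^f−1` are pairwise distinct and nonzero over all `B*`;
if `f` is even the classes `(ℓ+1)s(B*) mod ℓ^f−1` are pairwise distinct and
nonzero over nonempty proper `B*`.  For all `n₁, n₂` with `n = n₁ − n₂`:
`M(n₁,n₂) = 2^f + 2` if `n ≡ 0 (mod ℓ^f−1)` and `f` is even;
`M(n₁,n₂) = 2^f + 1` if the class of `n` lies in `A`; and
`M(n₁,n₂) = 2^f` otherwise. -/
theorem stmt15 (ℓ f : ℕ) (hℓ : ℓ.Prime) (hℓ3 : 3 < ℓ) (hf : 0 < f) :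
    (Odd f →
      (∀ B₁ B₂ : Finset (Fin f),
        Int.ModEq ((ℓ : ℤ) ^ f - 1) (-1 + ((ℓ : ℤ) + 1) * sAlt ℓ f B₁)
          (-1 + ((ℓ : ℤ) + 1) * sAlt ℓ f B₂) → B₁ = B₂) ∧
      (∀ B : Finset (Fin f),
        ¬ Int.ModEq ((ℓ : ℤ) ^ f - 1) (-1 + ((ℓ : ℤ) + 1) * sAlt ℓ f B) 0)) ∧
    (Even f →
      (∀ B₁ B₂ : Finset (Fin f), B₁.Nonempty → B₁ ≠ Finset.univ →
        B₂.Nonempty → B₂ ≠ Finset.univ →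
        Int.ModEq ((ℓ : ℤ) ^ f - 1) (((ℓ : ℤ) + 1) * sAlt ℓ f B₁)
          (((ℓ : ℤ) + 1) * sAlt ℓ f B₂) → B₁ = B₂) ∧
      (∀ B : Finset (Fin f), B.Nonempty → B ≠ Finset.univ →
        ¬ Int.ModEq ((ℓ : ℤ) ^ f - 1) (((ℓ : ℤ) + 1) * sAlt ℓ f B) 0)) ∧
    (∀ n₁ n₂ : ℤ,
      ((Int.ModEq ((ℓ : ℤ) ^ f - 1) (n₁ - n₂) 0 ∧ Even f) →
        (Tset2 ℓ f n₁ n₂).ncard = 2 ^ f + 2) ∧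
      (inA ℓ f (n₁ - n₂) → (Tset2 ℓ f n₁ n₂).ncard = 2 ^ f + 1) ∧
      (¬ (Int.ModEq ((ℓ : ℤ) ^ f - 1) (n₁ - n₂) 0 ∧ Even f) →
        ¬ inA ℓ f (n₁ - n₂) → (Tset2 ℓ f n₁ n₂).ncard = 2 ^ f)) := by
  have hℓ5 : 5 ≤ ℓ := by
    have h4 : ℓ ≠ 4 := by
      intro h; rw [h] at hℓ; norm_num at hℓ
    omega
  set L : ℤ := (ℓ : ℤ) with hLdef
  have hL5 : (5 : ℤ) ≤ L := by rw [hLdef]; exact_mod_cast hℓ5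
  set q : ℤ := L ^ f - 1 with hqdef
  have hq : 0 < q := by
    have : (1 : ℤ) < L ^ f := one_lt_pow₀ (by linarith) hf.ne'
    simp only [hqdef]; linarith
  have hne : Nonempty (Fin f) := ⟨⟨0, hf⟩⟩
  have huniv_ne : (Finset.univ : Finset (Fin f)) ≠ ∅ :=
    Finset.nonempty_iff_ne_empty.mp Finset.univ_nonempty
  refine ⟨?_, ?_, ?_⟩
  · -- odd f part
    intro hodd
    have hnev : ¬ Even f := Nat.not_even_iff_odd.mpr hodd
    constructor
    · intro B₁ B₂ hmod
      have hd := Int.modEq_iff_dvd.mp hmod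
      rw [show (-1 + (L + 1) * sAlt ℓ f B₂) - (-1 + (L + 1) * sAlt ℓ f B₁)
        = (L + 1) * (sAlt ℓ f B₂ - sAlt ℓ f B₁) + 0 from by ring] at hd
      have hc := core ℓ f hℓ5 hf B₂ B₁ 0 (by norm_num) hd
      rcases hc.2 with h | ⟨hev, -⟩
      · exact h.symm
      · exact absurd hev hnev
    · intro B hmod
      have hd := Int.modEq_iff_dvd.mp hmod
      rw [show (0:ℤ) - (-1 + (L + 1) * sAlt ℓ f B)
        = (L + 1) * (sAlt ℓ f ∅ - sAlt ℓ f B) + 1 from by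
          rw [sAlt_empty]; ring] at hd
      have hc := core ℓ f hℓ5 hf ∅ B 1 (by norm_num) hd
      exact one_ne_zero hc.1
  · -- even f part
    intro hev
    constructor
    · intro B₁ B₂ h1ne h1u h2ne h2u hmod
      have hd := Int.modEq_iff_dvd.mp hmod
      rw [show ((L + 1) * sAlt ℓ f B₂) - ((L + 1) * sAlt ℓ f B₁)
        = (L + 1) * (sAlt ℓ f B₂ - sAlt ℓ f B₁) + 0 from by ring] at hd
      have hc := core ℓ f hℓ5 hf B₂ B₁ 0 (by norm_num) hd
      rcases hc.2 with h | ⟨-, ⟨-, h⟩ | ⟨-, h⟩⟩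
      · exact h.symm
      · exact absurd h (Finset.nonempty_iff_ne_empty.mp h1ne)
      · exact absurd h h1u
    · intro B hBne hBu hmod
      have hd := Int.modEq_iff_dvd.mp hmod
      rw [show (0:ℤ) - ((L + 1) * sAlt ℓ f B)
        = (L + 1) * (sAlt ℓ f ∅ - sAlt ℓ f B) + 0 from by
          rw [sAlt_empty]; ring] at hd
      have hc := core ℓ f hℓ5 hf ∅ B 0 (by norm_num) hd
      rcases hc.2 with h | ⟨-, ⟨h, -⟩ | ⟨-, h⟩⟩
      · exact absurd h.symm (Finset.nonempty_iff_ne_empty.mp hBne)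
      · exact absurd h.symm huniv_ne
      · exact absurd h hBu
  · -- counting part
    intro n₁ n₂
    set n : ℤ := n₁ - n₂ with hndef
    have hcount := count_main ℓ f (by omega) hf n₁ n₂
    rw [← hLdef, ← hqdef, ← hndef] at hcount
    set Fs : Finset (Finset (Fin f)) := Finset.univ.filter (fun B : Finset (Fin f) =>
      q ∣ n - (cf f + (L + 1) * sAlt ℓ f B)) with hFs
    refine ⟨?_, ?_, ?_⟩
    · -- n ≡ 0 and f even
      rintro ⟨hmod, hev⟩
      have hn : q ∣ n := by
        have := Int.modEq_iff_dvd.mp hmod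
        rwa [zero_sub, dvd_neg] at this
      have hcf : cf f = 0 := if_pos hev
      have hFeq : Fs = {∅, Finset.univ} := by
        ext B
        rw [hFs, Finset.mem_filter]
        simp only [Finset.mem_univ, true_and, Finset.mem_insert, Finset.mem_singleton]
        constructor
        · intro hd
          have hd2 : q ∣ (L + 1) * (sAlt ℓ f B - sAlt ℓ f ∅) + 0 := by
            have h3 := dvd_sub hn hd
            rwa [show n - (n - (cf f + (L+1) * sAlt ℓ f B))
              = (L + 1) * (sAlt ℓ f B - sAlt ℓ f ∅) + 0 from by
                rw [sAlt_empty, hcf]; ring] at h3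
          have hc := core ℓ f hℓ5 hf B ∅ 0 (by norm_num) hd2
          rcases hc.2 with h | ⟨-, ⟨h, -⟩ | ⟨h, -⟩⟩
          · exact Or.inl h
          · exact Or.inr h
          · exact Or.inl h
        · rintro (rfl | rfl)
          · rw [hcf, sAlt_empty]
            simpa using hn
          · rw [hcf, sAlt_univ ℓ f hev, ← hqdef]
            rw [show n - (0 + -q) = n + q from by ring]
            exact dvd_add hn dvd_rfl
      rw [hcount, hFeq]
      rw [Finset.card_insert_of_notMem (by simpa using huniv_ne.symm),
        Finset.card_singleton]
    · -- inA case
      intro hA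
      have hFeq : Fs.card = 1 := by
        rcases hA with ⟨hodd, B₀, hmod⟩ | ⟨hev, B₀, hB₀ne, hB₀u, hmod⟩
        · have hnev : ¬ Even f := Nat.not_even_iff_odd.mpr hodd
          have hcf : cf f = -1 := if_neg hnev
          have hB₀mem : B₀ ∈ Fs := by
            rw [hFs, Finset.mem_filter]
            refine ⟨Finset.mem_univ _, ?_⟩
            have hd := Int.modEq_iff_dvd.mp hmod
            rw [show n - (cf f + (L+1) * sAlt ℓ f B₀)
              = -((-1 + (L + 1) * sAlt ℓ f B₀) - n) from by rw [hcf]; ring]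
            exact dvd_neg.mpr hd
          have huniq : ∀ B ∈ Fs, B = B₀ := by
            intro B hB
            rw [hFs, Finset.mem_filter] at hB
            have hd := hB.2
            rw [hFs, Finset.mem_filter] at hB₀mem
            have hd0 := hB₀mem.2
            have hd2 : q ∣ (L + 1) * (sAlt ℓ f B - sAlt ℓ f B₀) + 0 := by
              rw [show (L + 1) * (sAlt ℓ f B - sAlt ℓ f B₀) + 0
                = (n - (cf f + (L+1) * sAlt ℓ f B₀)) - (n - (cf f + (L+1) * sAlt ℓ f B)) from by ring]
              exact dvd_sub hd0 hd
            have hc := core ℓ f hℓ5 hf B B₀ 0 (by norm_num) hd2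
            rcases hc.2 with h | ⟨hev, -⟩
            · exact h
            · exact absurd hev hnev
          rw [Finset.card_eq_one]
          exact ⟨B₀, Finset.eq_singleton_iff_unique_mem.mpr ⟨hB₀mem, huniq⟩⟩
        · have hcf : cf f = 0 := if_pos hev
          have hB₀mem : B₀ ∈ Fs := by
            rw [hFs, Finset.mem_filter]
            refine ⟨Finset.mem_univ _, ?_⟩
            have hd := Int.modEq_iff_dvd.mp hmod
            rw [show n - (cf f + (L+1) * sAlt ℓ f B₀)
              = -(((L + 1) * sAlt ℓ f B₀) - n) from by rw [hcf]; ring]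
            exact dvd_neg.mpr hd
          have huniq : ∀ B ∈ Fs, B = B₀ := by
            intro B hB
            rw [hFs, Finset.mem_filter] at hB
            have hd := hB.2
            rw [hFs, Finset.mem_filter] at hB₀mem
            have hd0 := hB₀mem.2
            have hd2 : q ∣ (L + 1) * (sAlt ℓ f B - sAlt ℓ f B₀) + 0 := by
              rw [show (L + 1) * (sAlt ℓ f B - sAlt ℓ f B₀) + 0
                = (n - (cf f + (L+1) * sAlt ℓ f B₀)) - (n - (cf f + (L+1) * sAlt ℓ f B)) from by ring]
              exact dvd_sub hd0 hd
            have hc := core ℓ f hℓ5 hf B B₀ 0 (by norm_num) hd2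
            rcases hc.2 with h | ⟨-, ⟨-, h⟩ | ⟨-, h⟩⟩
            · exact h
            · exact absurd h (Finset.nonempty_iff_ne_empty.mp hB₀ne)
            · exact absurd h hB₀u
          rw [Finset.card_eq_one]
          exact ⟨B₀, Finset.eq_singleton_iff_unique_mem.mpr ⟨hB₀mem, huniq⟩⟩
      rw [hcount, hFeq]
    · -- neither case
      intro hnot hnA
      have hFeq : Fs = ∅ := by
        rw [Finset.eq_empty_iff_forall_notMem]
        intro B hB
        rw [hFs, Finset.mem_filter] at hB
        have hd := hB.2
        rcases Nat.even_or_odd f with hev | hodd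
        · have hcf : cf f = 0 := if_pos hev
          rw [hcf] at hd
          by_cases hBe : B = ∅
          · subst hBe
            rw [sAlt_empty] at hd
            apply hnot
            refine ⟨?_, hev⟩
            rw [Int.modEq_iff_dvd]
            rw [show (0:ℤ) - n = -(n - (0 + (L+1) * 0)) from by ring]
            exact dvd_neg.mpr hd
          · by_cases hBu : B = Finset.univ
            · subst hBu
              rw [sAlt_univ ℓ f hev, ← hqdef] at hd
              apply hnot
              refine ⟨?_, hev⟩
              rw [Int.modEq_iff_dvd]
              have hn : q ∣ n := by
                have h2 := dvd_sub hd dvd_rfl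
                rwa [show n - (0 + -q) - q = n from by ring] at h2
              rw [zero_sub]
              exact dvd_neg.mpr hn
            · apply hnA
              right
              refine ⟨hev, B, Finset.nonempty_iff_ne_empty.mpr hBe, hBu, ?_⟩
              rw [Int.modEq_iff_dvd]
              rw [show ((L + 1) * sAlt ℓ f B) - n = -(n - (0 + (L+1) * sAlt ℓ f B)) from by ring]
              exact dvd_neg.mpr hd
        · have hcf : cf f = -1 := if_neg (Nat.not_even_iff_odd.mpr hodd)
          rw [hcf] at hd
          apply hnA
          left
          refine ⟨hodd, B, ?_⟩
          rw [Int.modEq_iff_dvd]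
          rw [show (-1 + (L + 1) * sAlt ℓ f B) - n = -(n - (-1 + (L+1) * sAlt ℓ f B)) from by ring]
          exact dvd_neg.mpr hd
      rw [hcount, hFeq, Finset.card_empty, Nat.add_zero]

end Stmt15
end
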